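/- arXiv:2111.01907 — 5 statements merged into one kernel-verified Lean document; each statement's English description precedes it below -/
import Mathlib

section
/- Let P be a convex polyomino whose bounding box is the rectangle with vertex set [(0,0),(m,n)], and assume (0,0) ∈ V(P) and (m,n) ∈ V(P). Then V(P) is a sublattice of ℕ²: for any two a, b ∈ V(P), the componentwise maximum a ∨ b and the componentwise minimum a ∧ b belong to V(P). Moreover V(P) is a simple planar distributive lattice. -/
open scoped Classical

/-- Lattice points of `ℕ²`; a cell is identified with its lower-left corner. -/
abbrev Pt : Type := ℕ × ℕ

/-- The four vertices (corners) of the unit cell with lower-left corner `a`. -/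
def cellVerts (a : Pt) : Finset Pt :=
  {a, (a.1 + 1, a.2), (a.1, a.2 + 1), (a.1 + 1, a.2 + 1)}

/-- The vertex set `V(P)` of a collection of cells. -/
def vertexSet (P : Finset Pt) : Finset Pt := P.biUnion cellVerts

/-- Two cells share an edge. -/
def cellAdj (a b : Pt) : Prop :=
  (a.1 = b.1 ∧ (a.2 = b.2 + 1 ∨ b.2 = a.2 + 1)) ∨
  (a.2 = b.2 ∧ (a.1 = b.1 + 1 ∨ b.1 = a.1 + 1))

/-- Any two cells of `S` are joined by a sequence of edge-adjacent cells of `S`. -/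
def CellConnected (S : Set Pt) : Prop :=
  ∀ a ∈ S, ∀ b ∈ S,
    Relation.ReflTransGen (fun x y => cellAdj x y ∧ x ∈ S ∧ y ∈ S) a b

/-- A polyomino: a nonempty, edge-connected finite collection of cells. -/
def IsPolyomino (P : Finset Pt) : Prop :=
  P.Nonempty ∧ CellConnected (↑P : Set Pt)

/-- A simple polyomino: the cells of `ℕ²` outside of `P` are also edge-connected. -/
def IsSimplePolyomino (P : Finset Pt) : Prop :=
  IsPolyomino P ∧ CellConnected ((↑P : Set Pt)ᶜ)

/-- The cells of the interval `[a, b]` of `ℕ²`. -/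
def intervalCells (a b : Pt) : Finset Pt :=
  Finset.Ico a.1 b.1 ×ˢ Finset.Ico a.2 b.2

/-- `[a, b]` is a proper interval all of whose cells belong to `P`
(an inner interval, also called a rectangle of `P`). -/
def IsInnerInterval (P : Finset Pt) (a b : Pt) : Prop :=
  a.1 < b.1 ∧ a.2 < b.2 ∧ intervalCells a b ⊆ P

/-- The ideal of inner 2-minors of a collection of cells `P`, in the polynomial
ring whose variables are indexed by a finite vertex set `V`. -/
noncomputable def innerMinorIdeal (K : Type*) [Field K] (V P : Finset Pt) :
    Ideal (MvPolynomial {v : Pt // v ∈ V} K) :=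
  Ideal.span { f | ∃ a b c d : {v : Pt // v ∈ V},
    IsInnerInterval P a.1 b.1 ∧
    c.1 = ((a.1).1, (b.1).2) ∧ d.1 = ((b.1).1, (a.1).2) ∧
    f = MvPolynomial.X a * MvPolynomial.X b - MvPolynomial.X c * MvPolynomial.X d }

/-- The polyomino ideal `I_P ⊆ K[x_v : v ∈ V(P)]`. -/
noncomputable def polyoIdeal (K : Type*) [Field K] (P : Finset Pt) :
    Ideal (MvPolynomial {v : Pt // v ∈ vertexSet P} K) :=
  innerMinorIdeal K (vertexSet P) P

/-- The join-meet ideal of a finite sublattice `L` of `ℕ²`. -/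
noncomputable def joinMeetIdeal (K : Type*) [Field K] (L : Finset Pt) :
    Ideal (MvPolynomial {v : Pt // v ∈ L} K) :=
  Ideal.span { f | ∃ a b c d : {v : Pt // v ∈ L},
    ¬ a.1 ≤ b.1 ∧ ¬ b.1 ≤ a.1 ∧ c.1 = a.1 ⊔ b.1 ∧ d.1 = a.1 ⊓ b.1 ∧
    f = MvPolynomial.X a * MvPolynomial.X b - MvPolynomial.X c * MvPolynomial.X d }

/-- A saturated chain in `L` from `a` to `b` whose consecutive elements differ by
`(1,0)` or `(0,1)`. -/
def UnitChain (L : Finset Pt) (a b : Pt) : Prop :=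
  ∃ (k : ℕ) (c : ℕ → Pt), c 0 = a ∧ c k = b ∧ (∀ i ≤ k, c i ∈ L) ∧
    ∀ i < k, c (i + 1) = c i + (1, 0) ∨ c (i + 1) = c i + (0, 1)

/-- The rank of a finite sublattice of `ℕ²` (whose minimum is `(0,0)`). -/
def latRank (L : Finset Pt) : ℕ := L.sup fun a => a.1 + a.2

/-- A simple planar distributive lattice: a finite sublattice of `ℕ²` containing
`(0,0)`, in which any two comparable elements are joined by a saturated chain of unit
steps, and having at least two elements in each intermediate rank. -/
def IsSPDL (L : Finset Pt) : Prop :=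
  (0, 0) ∈ L ∧
  (∀ a ∈ L, ∀ b ∈ L, a ⊔ b ∈ L ∧ a ⊓ b ∈ L) ∧
  (∀ a ∈ L, ∀ b ∈ L, a ≤ b → UnitChain L a b) ∧
  ∀ r : ℕ, 0 < r → r < latRank L → 2 ≤ (L.filter fun a => a.1 + a.2 = r).card

/-- The cells all of whose four vertices lie in `L`. -/
def cellsOf (L : Finset Pt) : Finset Pt := L.filter fun a => cellVerts a ⊆ L

/-- A north-east lattice path of length `k` starting at the origin. -/
def IsNEPath (k : ℕ) (f : ℕ → Pt) : Prop :=
  f 0 = (0, 0) ∧ ∀ i < k, f (i + 1) = f i + (1, 0) ∨ f (i + 1) = f i + (0, 1)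

/-- `P` is the parallelogram polyomino bounded above by the path `u` and below by
the path `l`, both of length `k`, meeting only at their endpoints. -/
def ParaData (P : Finset Pt) (k : ℕ) (u l : ℕ → Pt) : Prop :=
  0 < k ∧ IsNEPath k u ∧ IsNEPath k l ∧ u k = l k ∧
  (∀ i ≤ k, (u i).1 ≤ (l i).1) ∧
  (∀ i, 0 < i → i < k → u i ≠ l i) ∧
  P.Nonempty ∧
  ∀ c : Pt, c ∈ P ↔
    ∀ v ∈ cellVerts c, v.1 + v.2 ≤ k ∧ (u (v.1 + v.2)).1 ≤ v.1 ∧ v.1 ≤ (l (v.1 + v.2)).1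

/-- A parallelogram polyomino. -/
def IsParaPoly (P : Finset Pt) : Prop := ∃ k u l, ParaData P k u l

/-- `F` is a set of non-attacking rooks on `P`. -/
def NonAttacking (P : Finset Pt) (F : Finset Pt) : Prop :=
  F ⊆ P ∧ ∀ a ∈ F, ∀ b ∈ F, a ≠ b → a.1 ≠ b.1 ∧ a.2 ≠ b.2

/-- A switch: inside a rectangle `[a,b]` of `P`, replace the diagonal pair of cells by
the antidiagonal pair, or vice versa. -/
def SwitchStep (P : Finset Pt) (F G : Finset Pt) : Prop :=
  ∃ a b : Pt, IsInnerInterval P a b ∧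
    ((a ∈ F ∧ (b.1 - 1, b.2 - 1) ∈ F ∧
       G = F \ {a, (b.1 - 1, b.2 - 1)} ∪ {(a.1, b.2 - 1), (b.1 - 1, a.2)}) ∨
     ((a.1, b.2 - 1) ∈ F ∧ (b.1 - 1, a.2) ∈ F ∧
       G = F \ {(a.1, b.2 - 1), (b.1 - 1, a.2)} ∪ {a, (b.1 - 1, b.2 - 1)}))

/-- The number `|R̃_k|` of equivalence classes (under finitely many switches) of sets of
`k` non-attacking rooks on `P`. -/
noncomputable def rtilde (P : Finset Pt) (k : ℕ) : ℕ :=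
  Nat.card (Quot fun F G : {F : Finset Pt // NonAttacking P F ∧ F.card = k} =>
    SwitchStep P F.1 G.1)

/-- The rook number `r(P)`: the maximum number of non-attacking rooks on `P`. -/
noncomputable def rookNum (P : Finset Pt) : ℕ :=
  (P.powerset.filter fun F => NonAttacking P F).sup Finset.card

/-- The Hilbert function of `K[P] = K[x_v : v ∈ V(P)]/I_P`. -/
noncomputable def hilbertFn (K : Type*) [Field K] (P : Finset Pt) (k : ℕ) : ℕ :=
  Module.finrank K
    ↥(Submodule.map (Ideal.Quotient.mkₐ K (polyoIdeal K P)).toLinearMap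
      (MvPolynomial.homogeneousSubmodule {v : Pt // v ∈ vertexSet P} K k))

/-- The Hilbert–Poincaré series of `K[P]`, as a formal power series over `ℤ`. -/
noncomputable def hilbertSeries (K : Type*) [Field K] (P : Finset Pt) : PowerSeries ℤ :=
  PowerSeries.mk fun k => (hilbertFn K P k : ℤ)

/-- `[a,b]` is a maximal rectangle of `P`. -/
def MaximalRect (P : Finset Pt) (a b : Pt) : Prop :=
  IsInnerInterval P a b ∧
  ∀ a' b', IsInnerInterval P a' b' → a' ≤ a → b ≤ b' → a' = a ∧ b' = b

/-- The rectangle `[sa,sb]` of `P` is a single rectangle whose unique maximal rectangle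
is `[ra,rb]`: it is contained in `[ra,rb]` and shares no cell with any other maximal
rectangle of `P`. -/
def SingleRectOf (P : Finset Pt) (ra rb sa sb : Pt) : Prop :=
  IsInnerInterval P sa sb ∧ ra ≤ sa ∧ sb ≤ rb ∧
  ∀ ra' rb', MaximalRect P ra' rb' → ¬(ra' = ra ∧ rb' = rb) →
    ∀ c ∈ intervalCells sa sb, c ∉ intervalCells ra' rb'

/-- `P` has the S-property: every maximal rectangle of `P` has a unique single square. -/
def HasSProperty (P : Finset Pt) : Prop :=
  ∀ ra rb, MaximalRect P ra rb →
    ∃! s : Pt × Pt,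
      SingleRectOf P ra rb s.1 s.2 ∧ s.2.1 - s.1.1 = s.2.2 - s.1.2

/-- `P` is shortenable: removing the unique maximal rectangle `R₀` containing `(0,0)`
leaves (up to translation) a parallelogram polyomino. -/
def Shortenable (P : Finset Pt) : Prop :=
  ∃ b₀, MaximalRect P (0, 0) b₀ ∧
    ∃ (w : Pt) (Q : Finset Pt), IsParaPoly Q ∧
      P \ intervalCells (0, 0) b₀ = Q.image fun c => c + w

/-- `P` is well-shortenable: it is shortenable, and `P ∖ R₀` is (up to translation)
either a rectangle or again a well-shortenable parallelogram polyomino. -/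
inductive WellShortenable : Finset Pt → Prop
  | base (P : Finset Pt) (b₀ : Pt) (hmax : MaximalRect P (0, 0) b₀)
      (w : Pt) (Q : Finset Pt) (hQ : IsParaPoly Q)
      (heq : P \ intervalCells (0, 0) b₀ = Q.image fun c => c + w)
      (hrect : ∃ a b : Pt, Q = intervalCells a b) : WellShortenable P
  | step (P : Finset Pt) (b₀ : Pt) (hmax : MaximalRect P (0, 0) b₀)
      (w : Pt) (Q : Finset Pt) (hQ : IsParaPoly Q)
      (heq : P \ intervalCells (0, 0) b₀ = Q.image fun c => c + w)
      (hws : WellShortenable Q) : WellShortenable P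

/-- `a` is a join-irreducible element of the finite lattice `L ⊆ ℕ²`
(whose minimum is `(0,0)`). -/
def JoinIrred (L : Finset Pt) (a : Pt) : Prop :=
  a ∈ L ∧ a ≠ (0, 0) ∧ ∀ b ∈ L, ∀ c ∈ L, a = b ⊔ c → a = b ∨ a = c

/-- `c` is a maximal chain of the subposet `J` of `ℕ²`. -/
def MaxChainIn (J : Set Pt) (c : Set Pt) : Prop :=
  c ⊆ J ∧ IsChain (· ≤ ·) c ∧
  ∀ c', c' ⊆ J → IsChain (· ≤ ·) c' → c ⊆ c' → c = c'

/-- The subposet `J` of `ℕ²` is pure: all its maximal chains have the same length. -/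
def PurePoset (J : Set Pt) : Prop :=
  ∀ c₁ c₂, MaxChainIn J c₁ → MaxChainIn J c₂ → c₁.ncard = c₂.ncard

/-- A maximal chain of a simple planar distributive lattice `L`, viewed as a monotone
lattice path of unit steps from `(0,0)` to `max L`. -/
def IsMaxLatticeChain (L : Finset Pt) (N : ℕ) (c : ℕ → Pt) : Prop :=
  c 0 = (0, 0) ∧ (∀ i ≤ N, c i ∈ L) ∧ (∀ a ∈ L, a ≤ c N) ∧
  ∀ i < N, c (i + 1) = c i + (1, 0) ∨ c (i + 1) = c i + (0, 1)

/-- The chain `c` has a descent at the cell with lower-left corner `a`. -/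
def DescentCell (L : Finset Pt) (N : ℕ) (c : ℕ → Pt) (a : Pt) : Prop :=
  cellVerts a ⊆ L ∧
  ∃ s, s + 2 ≤ N ∧ c s = a ∧ c (s + 1) = (a.1 + 1, a.2) ∧ c (s + 2) = (a.1 + 1, a.2 + 1)

/-- The `i`-th step of the path `f` is a north step. -/
def NorthStep (f : ℕ → Pt) (i : ℕ) : Prop := f (i + 1) = f i + (0, 1)

/-- The `i`-th step of the path `f` is an east step. -/
def EastStep (f : ℕ → Pt) (i : ℕ) : Prop := f (i + 1) = f i + (1, 0)

/-- `[i, i+c)` is a maximal run of steps satisfying `Q` in a path of length `k`. -/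
def MaxRun (Q : ℕ → Prop) (k i c : ℕ) : Prop :=
  0 < c ∧ i + c ≤ k ∧ (∀ j, i ≤ j → j < i + c → Q j) ∧
  (i = 0 ∨ ¬ Q (i - 1)) ∧ (i + c = k ∨ ¬ Q (i + c))

/-- The `i`-th step of the 2-colored Motzkin path associated to the pair of paths
`(u, l)` is a rise step. -/
def RiseStep (u l : ℕ → Pt) (i : ℕ) : Prop := NorthStep u i ∧ EastStep l i

/-- Fall step of the associated 2-colored Motzkin path. -/
def FallStep (u l : ℕ → Pt) (i : ℕ) : Prop := EastStep u i ∧ NorthStep l i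

/-- `α`-colored horizontal step of the associated 2-colored Motzkin path. -/
def AlphaStep (u l : ℕ → Pt) (i : ℕ) : Prop := NorthStep u i ∧ NorthStep l i

/-- `β`-colored horizontal step of the associated 2-colored Motzkin path. -/
def BetaStep (u l : ℕ → Pt) (i : ℕ) : Prop := EastStep u i ∧ EastStep l i

/-- Row convexity of a collection of cells. -/
def RowConvex (P : Finset Pt) : Prop :=
  ∀ i j k : ℕ, (i, j) ∈ P → (k, j) ∈ P → ∀ l, i ≤ l → l ≤ k → (l, j) ∈ P

/-- Column convexity of a collection of cells. -/
def ColConvex (P : Finset Pt) : Prop :=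
  ∀ i j k : ℕ, (i, j) ∈ P → (i, k) ∈ P → ∀ l, j ≤ l → l ≤ k → (i, l) ∈ P

/-- `{(r,j),(r+1,j)}` is a horizontal edge of a cell of `P`. -/
def HEdge (P : Finset Pt) (r j : ℕ) : Prop :=
  (r, j) ∈ P ∨ (0 < j ∧ (r, j - 1) ∈ P)

/-- `{(i,r),(i,r+1)}` is a vertical edge of a cell of `P`. -/
def VEdge (P : Finset Pt) (i r : ℕ) : Prop :=
  (i, r) ∈ P ∨ (0 < i ∧ (i - 1, r) ∈ P)

/-- `[(i,j),(k,j)]` is a maximal horizontal edge interval of `P`. -/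
def MaxHInterval (P : Finset Pt) (i k j : ℕ) : Prop :=
  i < k ∧ (∀ r, i ≤ r → r < k → HEdge P r j) ∧
  ∀ i' k', i' < k' → (∀ r, i' ≤ r → r < k' → HEdge P r j) → i' ≤ i → k ≤ k' →
    i' = i ∧ k' = k

/-- `[(i,j),(i,l)]` is a maximal vertical edge interval of `P`. -/
def MaxVInterval (P : Finset Pt) (i j l : ℕ) : Prop :=
  j < l ∧ (∀ r, j ≤ r → r < l → VEdge P i r) ∧
  ∀ j' l', j' < l' → (∀ r, j' ≤ r → r < l' → VEdge P i r) → j' ≤ j → l ≤ l' →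
    j' = j ∧ l' = l

/-- The minima of the maximal horizontal edge intervals of `P`. -/
def HMins (P : Finset Pt) : Set Pt := {a | ∃ k, MaxHInterval P a.1 k a.2}

/-- The minima of the maximal vertical edge intervals of `P`. -/
def VMins (P : Finset Pt) : Set Pt := {a | ∃ l, MaxVInterval P a.1 a.2 l}

/-! Each row of `P` is an interval of cells. Column convexity, together with the corner cells
`(0,0)` and `(m-1,n-1)`, forces both ends of these intervals to weakly increase from row to row,
and connectivity makes consecutive rows overlap. Hence `V(P)` is a staircase region, which is
closed under `⊔` and `⊓` and contains a unit-step chain between any two comparable points.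
For the ranks, connectivity yields a cell of every rank between those of the corner cells, and a
cell `(i, j)` of rank `r - 1` has the two vertices `(i + 1, j)` and `(i, j + 1)` of rank `r`. -/

theorem Relation.ReflTransGen.exists_le_lt {α β : Type*} [LinearOrder β] {r : α → α → Prop}
    {a b : α} (f : α → β) {k : β} (h : Relation.ReflTransGen r a b) (ha : f a ≤ k)
    (hb : k < f b) : ∃ x y, r x y ∧ f x ≤ k ∧ k < f y := by
  induction h with
  | refl => exact absurd (ha.trans_lt hb) (lt_irrefl _)
  | @tail c d _ hcd ih =>
    by_cases hc : k < f c
    · exact ih hc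
    · exact ⟨c, d, hcd, not_lt.1 hc, hb⟩

theorem cellVerts_eq_Icc (a : Pt) : cellVerts a = Finset.Icc a (a + (1, 1)) := by
  obtain ⟨i, j⟩ := a
  ext ⟨x, y⟩
  simp only [cellVerts, Finset.mem_insert, Finset.mem_singleton, Finset.mem_Icc, Prod.le_def,
    Prod.mk.injEq, Prod.fst_add, Prod.snd_add]
  omega

theorem mem_vertexSet {P : Finset Pt} {p : Pt} :
    p ∈ vertexSet P ↔ ∃ c ∈ P, c ≤ p ∧ p ≤ c + (1, 1) := by
  simp [vertexSet, cellVerts_eq_Icc]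

theorem zero_mem_of_zero_mem_vertexSet {P : Finset Pt} (h : (0, 0) ∈ vertexSet P) :
    (0, 0) ∈ P := by
  obtain ⟨c, hc, hc0, -⟩ := mem_vertexSet.1 h
  rwa [le_antisymm hc0 bot_le] at hc

theorem mem_of_mem_vertexSet_of_forall_lt {P : Finset Pt} {m n : ℕ}
    (hbound : ∀ c ∈ P, c.1 < m ∧ c.2 < n) (h : (m, n) ∈ vertexSet P) :
    (m - 1, n - 1) ∈ P := by
  obtain ⟨c, hc, -, hcmn⟩ := mem_vertexSet.1 h
  have := hbound c hc
  simp only [Prod.le_def, Prod.fst_add, Prod.snd_add] at hcmn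
  convert hc using 1
  ext <;> simp <;> omega

theorem latRank_vertexSet_le {P : Finset Pt} {m n : ℕ}
    (hbound : ∀ c ∈ P, c.1 < m ∧ c.2 < n) : latRank (vertexSet P) ≤ m + n := by
  refine Finset.sup_le fun p hp => ?_
  obtain ⟨c, hc, -, hpc⟩ := mem_vertexSet.1 hp
  have := hbound c hc
  simp only [Prod.le_def, Prod.fst_add, Prod.snd_add] at hpc
  omega

theorem two_le_card_vertexSet_rank {P : Finset Pt} {c : Pt} (hc : c ∈ P) :
    2 ≤ ((vertexSet P).filter fun a => a.1 + a.2 = c.1 + c.2 + 1).card := by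
  refine Finset.one_lt_card.2 ⟨(c.1 + 1, c.2), ?_, (c.1, c.2 + 1), ?_, by simp⟩ <;>
  · refine Finset.mem_filter.2 ⟨mem_vertexSet.2 ⟨c, hc, ?_⟩, by omega⟩
    simp [Prod.le_def]

namespace CellConnected

variable {S : Set Pt} {a b : Pt}

theorem exists_eq (hS : CellConnected S) (ha : a ∈ S) (hb : b ∈ S) (f : Pt → ℕ)
    (hf : ∀ x y, cellAdj x y → f y ≤ f x + 1) {k : ℕ} (hak : f a ≤ k) (hkb : k ≤ f b) :
    ∃ c ∈ S, f c = k := by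
  rcases hkb.lt_or_eq with hkb | rfl
  · obtain ⟨x, y, ⟨hxy, hx, -⟩, hxk, hky⟩ := (hS a ha b hb).exists_le_lt f hak hkb
    exact ⟨x, hx, le_antisymm hxk (by have := hf x y hxy; omega)⟩
  · exact ⟨b, hb, rfl⟩

theorem exists_mem_rank (hS : CellConnected S) (ha : a ∈ S) (hb : b ∈ S) {k : ℕ}
    (hak : a.1 + a.2 ≤ k) (hkb : k ≤ b.1 + b.2) : ∃ c ∈ S, c.1 + c.2 = k :=
  hS.exists_eq ha hb (fun c => c.1 + c.2) (fun _ _ h => by unfold cellAdj at h; omega) hak hkb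

theorem exists_mem_row (hS : CellConnected S) (ha : a ∈ S) (hb : b ∈ S) {j : ℕ}
    (haj : a.2 ≤ j) (hjb : j ≤ b.2) : ∃ x, (x, j) ∈ S := by
  obtain ⟨c, hc, rfl⟩ :=
    hS.exists_eq ha hb Prod.snd (fun _ _ h => by unfold cellAdj at h; omega) haj hjb
  exact ⟨c.1, hc⟩

theorem exists_vertical_pair (hS : CellConnected S) (ha : a ∈ S) (hb : b ∈ S) {j : ℕ}
    (haj : a.2 ≤ j) (hjb : j < b.2) : ∃ i, (i, j) ∈ S ∧ (i, j + 1) ∈ S := by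
  obtain ⟨⟨x, s⟩, ⟨y, t⟩, ⟨hxy, hx, hy⟩, hsj, hjt⟩ :=
    (hS a ha b hb).exists_le_lt Prod.snd haj hjb
  simp only [cellAdj] at hxy hsj hjt
  obtain ⟨rfl, rfl, rfl⟩ : y = x ∧ s = j ∧ t = j + 1 := by omega
  exact ⟨_, hx, hy⟩

end CellConnected

namespace UnitChain

variable {L : Finset Pt} {a b c : Pt}

theorem refl (ha : a ∈ L) : UnitChain L a a :=
  ⟨0, fun _ => a, rfl, rfl, fun _ _ => ha, fun _ h => absurd h (Nat.not_lt_zero _)⟩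

theorem cons (ha : a ∈ L) (hac : c = a + (1, 0) ∨ c = a + (0, 1)) (h : UnitChain L c b) :
    UnitChain L a b := by
  obtain ⟨k, f, hf0, hfk, hmem, hstep⟩ := h
  refine ⟨k + 1, fun i => if i = 0 then a else f (i - 1), rfl, by simpa, ?_, ?_⟩
  · rintro (_ | i) hi
    · exact ha
    · simpa using hmem i (by omega)
  · rintro (_ | i) hi
    · simpa [hf0] using hac
    · simpa using hstep i (by omega)

end UnitChain

theorem unitChain_of_exists_step {L : Finset Pt}
    (hstep : ∀ a ∈ L, ∀ b ∈ L, a ≤ b → a ≠ b →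
      ∃ c ∈ L, c ≤ b ∧ (c = a + (1, 0) ∨ c = a + (0, 1)))
    {a b : Pt} (ha : a ∈ L) (hb : b ∈ L) (hab : a ≤ b) : UnitChain L a b := by
  induction hd : (b.1 - a.1) + (b.2 - a.2) using Nat.strong_induction_on generalizing a with
  | _ d ih =>
    by_cases hne : a = b
    · exact hne ▸ UnitChain.refl ha
    obtain ⟨c, hc, hcb, hac⟩ := hstep a ha b hb hab hne
    have hab' := Prod.le_def.1 hab
    have hcb' := Prod.le_def.1 hcb
    refine UnitChain.cons ha hac (ih _ ?_ hc hcb rfl)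
    rcases hac with rfl | rfl <;>
      simp only [Prod.fst_add, Prod.snd_add, add_zero] at hcb' ⊢ <;> omega

structure IsStaircase (V : Finset Pt) (n : ℕ) (L R : ℕ → ℕ) : Prop where
  mem_iff : ∀ p : Pt, p ∈ V ↔ p.2 ≤ n ∧ L p.2 ≤ p.1 ∧ p.1 ≤ R p.2
  monotoneOn_left : MonotoneOn L (Set.Iic n)
  monotoneOn_right : MonotoneOn R (Set.Iic n)
  left_succ_le_right : ∀ t < n, L (t + 1) ≤ R t

namespace IsStaircase

variable {V : Finset Pt} {n : ℕ} {L R : ℕ → ℕ} {a b : Pt}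

theorem sup_mem_of_snd_le (hV : IsStaircase V n L R) (ha : a ∈ V) (hb : b ∈ V)
    (hab : a.2 ≤ b.2) : a ⊔ b ∈ V := by
  obtain ⟨-, -, haR⟩ := (hV.mem_iff a).1 ha
  obtain ⟨hbn, hbL, hbR⟩ := (hV.mem_iff b).1 hb
  have := hV.monotoneOn_right (hab.trans hbn) hbn hab
  refine (hV.mem_iff _).2 ⟨?_, ?_, ?_⟩ <;>
    simp only [Prod.fst_sup, Prod.snd_sup, sup_of_le_right hab] <;> omega

theorem inf_mem_of_snd_le (hV : IsStaircase V n L R) (ha : a ∈ V) (hb : b ∈ V)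
    (hab : a.2 ≤ b.2) : a ⊓ b ∈ V := by
  obtain ⟨han, haL, haR⟩ := (hV.mem_iff a).1 ha
  obtain ⟨hbn, hbL, -⟩ := (hV.mem_iff b).1 hb
  have := hV.monotoneOn_left han hbn hab
  refine (hV.mem_iff _).2 ⟨?_, ?_, ?_⟩ <;>
    simp only [Prod.fst_inf, Prod.snd_inf, inf_of_le_left hab] <;> omega

theorem sup_mem (hV : IsStaircase V n L R) (ha : a ∈ V) (hb : b ∈ V) : a ⊔ b ∈ V := by
  rcases le_total a.2 b.2 with hab | hba
  · exact hV.sup_mem_of_snd_le ha hb hab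
  · exact sup_comm b a ▸ hV.sup_mem_of_snd_le hb ha hba

theorem inf_mem (hV : IsStaircase V n L R) (ha : a ∈ V) (hb : b ∈ V) : a ⊓ b ∈ V := by
  rcases le_total a.2 b.2 with hab | hba
  · exact hV.inf_mem_of_snd_le ha hb hab
  · exact inf_comm b a ▸ hV.inf_mem_of_snd_le hb ha hba

/-- Go north when the next row already starts at or before `a`, and east otherwise. -/
theorem exists_step (hV : IsStaircase V n L R) (ha : a ∈ V) (hb : b ∈ V) (hab : a ≤ b)
    (hne : a ≠ b) : ∃ c ∈ V, c ≤ b ∧ (c = a + (1, 0) ∨ c = a + (0, 1)) := by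
  obtain ⟨han, haL, haR⟩ := (hV.mem_iff a).1 ha
  obtain ⟨hbn, hbL, hbR⟩ := (hV.mem_iff b).1 hb
  obtain ⟨hab1, hab2⟩ := Prod.le_def.1 hab
  have hne' : a.1 ≠ b.1 ∨ a.2 ≠ b.2 := by
    by_contra! h
    exact hne (Prod.ext h.1 h.2)
  by_cases hnorth : a.2 < b.2 ∧ L (a.2 + 1) ≤ a.1
  · have := hV.monotoneOn_right han (show a.2 + 1 ∈ Set.Iic n by simp; omega) (Nat.le_succ _)
    refine ⟨(a.1, a.2 + 1), (hV.mem_iff _).2 ⟨?_, ?_, ?_⟩, ?_, Or.inr rfl⟩ <;>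
      simp only [Prod.le_def] <;> omega
  · have hEast : a.1 + 1 ≤ R a.2 ∧ a.1 + 1 ≤ b.1 := by
      rcases hab2.lt_or_eq with hlt | heq
      · have := hV.left_succ_le_right a.2 (by omega)
        have := hV.monotoneOn_left (show a.2 + 1 ∈ Set.Iic n by simp; omega) hbn hlt
        omega
      · rw [heq]
        omega
    refine ⟨(a.1 + 1, a.2), (hV.mem_iff _).2 ⟨?_, ?_, ?_⟩, ?_, Or.inl rfl⟩ <;>
      simp only [Prod.le_def] <;> omega

end IsStaircase

-- Both are `0` on an empty row.
noncomputable def rowMin (P : Finset Pt) (j : ℕ) : ℕ := sInf {x | (x, j) ∈ P}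

noncomputable def rowMax (P : Finset Pt) (j : ℕ) : ℕ := sSup {x | (x, j) ∈ P}

section Rows

variable {P : Finset Pt} {x x₀ j : ℕ}

theorem bddAbove_row (P : Finset Pt) (j : ℕ) : BddAbove {x | (x, j) ∈ P} :=
  ⟨P.sup Prod.fst, fun _ hx => Finset.le_sup (f := Prod.fst) hx⟩

theorem rowMin_le (h : (x, j) ∈ P) : rowMin P j ≤ x := Nat.sInf_le h

theorem le_rowMax (h : (x, j) ∈ P) : x ≤ rowMax P j := le_csSup (bddAbove_row P j) h

theorem rowMin_mem (h : (x, j) ∈ P) : (rowMin P j, j) ∈ P :=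
  Nat.sInf_mem (s := {x | (x, j) ∈ P}) ⟨x, h⟩

theorem rowMax_mem (h : (x, j) ∈ P) : (rowMax P j, j) ∈ P :=
  Nat.sSup_mem (s := {x | (x, j) ∈ P}) ⟨x, h⟩ (bddAbove_row P j)

theorem RowConvex.mem_iff (hP : RowConvex P) (h : (x₀, j) ∈ P) :
    (x, j) ∈ P ↔ rowMin P j ≤ x ∧ x ≤ rowMax P j :=
  ⟨fun hx => ⟨rowMin_le hx, le_rowMax hx⟩,
    fun hx => hP _ _ _ (rowMin_mem h) (rowMax_mem h) x hx.1 hx.2⟩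

end Rows

structure IsDiagonalConvexPolyomino (P : Finset Pt) (m n : ℕ) : Prop where
  connected : CellConnected (↑P : Set Pt)
  rowConvex : RowConvex P
  colConvex : ColConvex P
  lt_of_mem : ∀ c ∈ P, c.1 < m ∧ c.2 < n
  zero_mem : (0, 0) ∈ P
  top_mem : (m - 1, n - 1) ∈ P

namespace IsDiagonalConvexPolyomino

variable {P : Finset Pt} {m n x j : ℕ}

theorem exists_mem_row (hP : IsDiagonalConvexPolyomino P m n) (hj : j < n) : ∃ x, (x, j) ∈ P :=
  hP.connected.exists_mem_row hP.zero_mem hP.top_mem (Nat.zero_le j) (by omega)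

theorem mem_row_iff (hP : IsDiagonalConvexPolyomino P m n) (hj : j < n) :
    (x, j) ∈ P ↔ rowMin P j ≤ x ∧ x ≤ rowMax P j :=
  hP.rowConvex.mem_iff (hP.exists_mem_row hj).choose_spec

theorem rowMin_le_rowMax (hP : IsDiagonalConvexPolyomino P m n) (hj : j < n) :
    rowMin P j ≤ rowMax P j := by
  obtain ⟨x, hx⟩ := hP.exists_mem_row hj
  exact (rowMin_le hx).trans (le_rowMax hx)

theorem rowMin_succ_le_rowMax (hP : IsDiagonalConvexPolyomino P m n) (hj : j + 1 < n) :
    rowMin P (j + 1) ≤ rowMax P j := by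
  obtain ⟨i, hi, hi'⟩ :=
    hP.connected.exists_vertical_pair hP.zero_mem hP.top_mem (Nat.zero_le j) (by simp; omega)
  exact (rowMin_le hi').trans (le_rowMax hi)

/-- Row `n - 1` reaches column `c = rowMax P j`. The first row above `j` that does overlaps the
row below it, so it contains `(c, t)`, and column convexity puts `(c, j + 1)` in `P`. -/
theorem rowMax_le_rowMax_succ (hP : IsDiagonalConvexPolyomino P m n) (hj : j + 1 < n) :
    rowMax P j ≤ rowMax P (j + 1) := by
  set c := rowMax P j
  have hc : (c, j) ∈ P := rowMax_mem (hP.exists_mem_row (by omega)).choose_spec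
  suffices key : ∀ t, j + 1 ≤ t → t < n → c ≤ rowMax P t → c ≤ rowMax P (j + 1) by
    have := (hP.lt_of_mem _ hc).1
    exact key (n - 1) (by omega) (by omega) (by have := le_rowMax hP.top_mem; omega)
  intro t ht
  induction t, ht using Nat.le_induction with
  | base => exact fun _ h => h
  | succ t ht ih =>
    intro htn hct
    by_cases h : c ≤ rowMax P t
    · exact ih (by omega) h
    · have hct' : (c, t + 1) ∈ P :=
        (hP.mem_row_iff htn).2 ⟨(hP.rowMin_succ_le_rowMax htn).trans (by omega), hct⟩
      exact le_rowMax (hP.colConvex c j (t + 1) hc hct' (j + 1) (by omega) (by omega))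

/-- Row `0` starts at column `0 ≤ c = rowMin P (j + 1)`. The last row below `j + 1` that starts
at or before `c` overlaps the row above it, so it contains `(c, t)`, and column convexity puts
`(c, j)` in `P`. -/
theorem rowMin_le_rowMin_succ (hP : IsDiagonalConvexPolyomino P m n) (hj : j + 1 < n) :
    rowMin P j ≤ rowMin P (j + 1) := by
  set c := rowMin P (j + 1)
  have hc : (c, j + 1) ∈ P := rowMin_mem (hP.exists_mem_row hj).choose_spec
  suffices key : ∀ t ≤ j, rowMin P t ≤ c → rowMin P j ≤ c from
    key 0 (Nat.zero_le j) ((rowMin_le hP.zero_mem).trans (Nat.zero_le c))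
  intro t ht
  induction ht using Nat.decreasingInduction with
  | self => exact id
  | of_succ t ht ih =>
    intro htc
    by_cases h : rowMin P (t + 1) ≤ c
    · exact ih h
    · have hct : (c, t) ∈ P :=
        (hP.mem_row_iff (by omega)).2
          ⟨htc, (le_of_not_ge h).trans (hP.rowMin_succ_le_rowMax (by omega))⟩
      exact rowMin_le (hP.colConvex c t (j + 1) hct hc j (by omega) (by omega))

theorem monotoneOn_rowMin (hP : IsDiagonalConvexPolyomino P m n) :
    MonotoneOn (rowMin P) (Set.Iio n) :=
  monotoneOn_of_le_succ Set.ordConnected_Iio fun t _ _ ht => by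
    simp only [Order.succ_eq_add_one, Set.mem_Iio] at ht ⊢
    exact hP.rowMin_le_rowMin_succ ht

theorem monotoneOn_rowMax (hP : IsDiagonalConvexPolyomino P m n) :
    MonotoneOn (rowMax P) (Set.Iio n) :=
  monotoneOn_of_le_succ Set.ordConnected_Iio fun t _ _ ht => by
    simp only [Order.succ_eq_add_one, Set.mem_Iio] at ht ⊢
    exact hP.rowMax_le_rowMax_succ ht

/-- Vertex row `t` is spanned by the cell rows `t - 1` and `t`, clamped to `[0, n - 1]`; since
their ends increase and consecutive cell rows overlap, it is
`[rowMin P (t - 1), rowMax P t + 1]`. -/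
theorem isStaircase_vertexSet (hP : IsDiagonalConvexPolyomino P m n) :
    IsStaircase (vertexSet P) n (fun t => rowMin P (t - 1))
      (fun t => rowMax P (min t (n - 1)) + 1) := by
  have hn : 0 < n := by have := (hP.lt_of_mem _ hP.top_mem).2; omega
  refine ⟨fun ⟨x, t⟩ => ?_, fun s _ t ht hst => ?_, fun s _ t ht hst => ?_, fun t ht => ?_⟩
  · simp only [mem_vertexSet]
    constructor
    · rintro ⟨⟨i, j⟩, hc, hle, hge⟩
      simp only [Prod.le_def, Prod.fst_add, Prod.snd_add] at hle hge
      have hj := (hP.lt_of_mem _ hc).2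
      have hrow := (hP.mem_row_iff hj).1 hc
      have := hP.monotoneOn_rowMin (show t - 1 ∈ Set.Iio n by simp; omega) hj (by omega)
      have := hP.monotoneOn_rowMax hj (show min t (n - 1) ∈ Set.Iio n by simp; omega)
        (by omega)
      omega
    · rintro ⟨ht, hl, hr⟩
      obtain ⟨j, hjn, hjt, htj, hlj, hrj⟩ :
          ∃ j < n, j ≤ t ∧ t ≤ j + 1 ∧ rowMin P j ≤ x ∧ x ≤ rowMax P j + 1 := by
        by_cases h : t < n ∧ rowMin P t ≤ x
        · exact ⟨t, h.1, le_rfl, by omega, h.2, by rwa [min_eq_left (by omega)] at hr⟩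
        · refine ⟨t - 1, by omega, by omega, by omega, hl, ?_⟩
          rcases ht.lt_or_eq with htn | rfl
          · have ht0 : t ≠ 0 := by rintro rfl; exact h ⟨htn, hl⟩
            have := hP.rowMin_succ_le_rowMax (j := t - 1) (by omega)
            rw [Nat.sub_add_cancel (Nat.one_le_iff_ne_zero.2 ht0)] at this
            omega
          · rwa [min_eq_right (Nat.sub_le t 1)] at hr
      refine ⟨(min x (rowMax P j), j), (hP.mem_row_iff hjn).2
        ⟨le_min hlj (hP.rowMin_le_rowMax hjn), min_le_right _ _⟩, ?_⟩
      simp only [Prod.le_def, Prod.fst_add, Prod.snd_add]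
      omega
  · have ht' := Set.mem_Iic.1 ht
    exact hP.monotoneOn_rowMin (Set.mem_Iio.2 (by omega)) (Set.mem_Iio.2 (by omega)) (by omega)
  · have ht' := Set.mem_Iic.1 ht
    exact Nat.add_le_add_right (hP.monotoneOn_rowMax (Set.mem_Iio.2 (by omega))
      (Set.mem_Iio.2 (by omega)) (by omega)) 1
  · simp only [Nat.add_sub_cancel, min_eq_left (Nat.le_sub_one_of_lt ht)]
    exact (hP.rowMin_le_rowMax ht).trans (Nat.le_succ _)

end IsDiagonalConvexPolyomino

theorem stmt1_general (P : Finset Pt) (m n : ℕ)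
    (hpoly : IsPolyomino P) (hrow : RowConvex P) (hcol : ColConvex P)
    (hbound : ∀ c ∈ P, c.1 < m ∧ c.2 < n)
    (h0 : (0, 0) ∈ vertexSet P) (hmn : (m, n) ∈ vertexSet P) :
    (∀ a ∈ vertexSet P, ∀ b ∈ vertexSet P,
      a ⊔ b ∈ vertexSet P ∧ a ⊓ b ∈ vertexSet P) ∧
    IsSPDL (vertexSet P) := by
  have hP : IsDiagonalConvexPolyomino P m n := ⟨hpoly.2, hrow, hcol, hbound,
    zero_mem_of_zero_mem_vertexSet h0, mem_of_mem_vertexSet_of_forall_lt hbound hmn⟩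
  have hV := hP.isStaircase_vertexSet
  have hlat : ∀ a ∈ vertexSet P, ∀ b ∈ vertexSet P,
      a ⊔ b ∈ vertexSet P ∧ a ⊓ b ∈ vertexSet P :=
    fun a ha b hb => ⟨hV.sup_mem ha hb, hV.inf_mem ha hb⟩
  refine ⟨hlat, h0, hlat, fun _ ha _ hb => unitChain_of_exists_step
    (fun _ ha _ hb => hV.exists_step ha hb) ha hb, fun r hr hrank => ?_⟩
  obtain ⟨c, hc, hcr⟩ := hP.connected.exists_mem_rank hP.zero_mem hP.top_mem (k := r - 1)
    (Nat.zero_le _) (by have := latRank_vertexSet_le hbound; simp; omega)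
  simpa [hcr, Nat.sub_add_cancel hr] using two_le_card_vertexSet_rank hc

theorem stmt1 (P : Finset Pt) (m n : ℕ)
    (hpoly : IsPolyomino P) (hrow : RowConvex P) (hcol : ColConvex P)
    (hbound : ∀ c ∈ P, c.1 < m ∧ c.2 < n)
    (hm : ∃ c ∈ P, c.1 + 1 = m) (hn : ∃ c ∈ P, c.2 + 1 = n)
    (hx0 : ∃ c ∈ P, c.1 = 0) (hy0 : ∃ c ∈ P, c.2 = 0)
    (h0 : (0, 0) ∈ vertexSet P) (hmn : (m, n) ∈ vertexSet P) :
    (∀ a ∈ vertexSet P, ∀ b ∈ vertexSet P,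
      a ⊔ b ∈ vertexSet P ∧ a ⊓ b ∈ vertexSet P) ∧
    IsSPDL (vertexSet P) :=
  stmt1_general P m n hpoly hrow hcol hbound h0 hmn
end

section
/- Let L be a simple planar distributive lattice and let C_1, …, C_r be cells all of whose vertices lie in L, with lower-left corners ℓ(C_k) = (i_k, j_k) satisfying i_1 < i_2 < … < i_r and j_1 < j_2 < … < j_r. Then there exists a maximal chain m of L whose set of descent cells is exactly {C_1, …, C_r} (so m has exactly r descents). -/
open scoped Classical

-- STATEMENT 6

lemma unitChain_point {L : Finset Pt} {a b : Pt} (h : UnitChain L a b)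
    {s : ℕ} (hs1 : a.1 + a.2 ≤ s) (hs2 : s ≤ b.1 + b.2) :
    ∃ p, p ∈ L ∧ p.1 + p.2 = s ∧ a ≤ p ∧ p ≤ b := by
  obtain ⟨k, c, hc0, hck, hmem, hstep⟩ := h
  subst hc0; subst hck
  have hrank : ∀ i, i ≤ k → (c i).1 + (c i).2 = (c 0).1 + (c 0).2 + i := by
    intro i hi
    induction i with
    | zero => simp
    | succ n ih =>
      have hn := ih (by omega)
      rcases hstep n (by omega) with h' | h' <;> rw [h'] <;>
        simp [Prod.fst_add, Prod.snd_add] <;> omega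
  have hmono : ∀ j, j ≤ k → ∀ i, i ≤ j → c i ≤ c j := by
    intro j
    induction j with
    | zero => intro _ i hi; interval_cases i; exact le_rfl
    | succ n ih =>
      intro hj i hi
      rcases Nat.lt_or_ge i (n + 1) with h' | h'
      · refine (ih (by omega) i (by omega)).trans ?_
        rcases hstep n (by omega) with h'' | h'' <;> rw [h''] <;>
          simp [Prod.le_def]
      · have : i = n + 1 := by omega
        rw [this]
  have hk' : (c 0).1 + (c 0).2 + k = (c k).1 + (c k).2 := (hrank k le_rfl).symm
  refine ⟨c (s - ((c 0).1 + (c 0).2)), hmem _ (by omega), ?_, ?_, ?_⟩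
  · have := hrank (s - ((c 0).1 + (c 0).2)) (by omega); omega
  · exact hmono _ (by omega) 0 (by omega)
  · exact hmono k le_rfl _ (by omega)

lemma spdl_conv {L : Finset Pt} (hL : IsSPDL L) {a b : Pt}
    (ha : a ∈ L) (hb : b ∈ L) (hr : a.1 + a.2 = b.1 + b.2)
    {x : ℕ} (hax : a.1 ≤ x) (hxb : x ≤ b.1) :
    (x, a.1 + a.2 - x) ∈ L := by
  obtain ⟨-, hjm, hchain, -⟩ := hL
  have hab1 : a.1 ≤ b.1 := le_trans hax hxb
  have hb2 : b.2 ≤ a.2 := by omega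
  have hj : a ⊔ b ∈ L := (hjm a ha b hb).1
  have hjeq : a ⊔ b = (b.1, a.2) := by
    simp [Prod.ext_iff]; omega
  rw [hjeq] at hj
  have h1 : UnitChain L a (b.1, a.2) :=
    hchain a ha _ hj (by simp [Prod.le_def]; omega)
  obtain ⟨p, hpL, hpr, hap, hpj⟩ := unitChain_point h1 (s := x + a.2)
    (by omega) (by simp; omega)
  have hp : p = (x, a.2) := by
    have h1' := hap.1; have h2' := hap.2; have h3' := hpj.1; have h4' := hpj.2
    simp at h3' h4'
    have : p.2 = a.2 := le_antisymm h4' h2'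
    have : p.1 = x := by omega
    simp [Prod.ext_iff]; omega
  rw [hp] at hpL
  have hq : ((x : ℕ), a.2) ⊓ b ∈ L := (hjm _ hpL b hb).2
  have hqeq : ((x : ℕ), a.2) ⊓ b = (x, b.2) := by
    simp [Prod.ext_iff]; omega
  rw [hqeq] at hq
  have h2 : UnitChain L (x, b.2) (x, a.2) :=
    hchain _ hq _ hpL (by simp [Prod.le_def, hb2])
  obtain ⟨p', hp'L, hp'r, h1', h2'⟩ := unitChain_point h2 (s := a.1 + a.2)
    (by simp; omega) (by simp; omega)
  have hp' : p' = (x, a.1 + a.2 - x) := by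
    have e1 := h1'.1; have e2 := h2'.1
    simp at e1 e2
    simp [Prod.ext_iff]; omega
  rw [← hp']; exact hp'L

noncomputable def mnX (L : Finset Pt) (s : ℕ) : ℕ :=
  sInf {x | ∃ y, x + y = s ∧ (x, y) ∈ L}

def gfun (a : Pt) (s : ℕ) : ℕ := min (a.1 + 1) (s - a.2)

noncomputable def bnd {r : ℕ} (C : Fin r → Pt) (s : ℕ) : ℕ :=
  Finset.univ.sup fun k => gfun (C k) s

noncomputable def xc (L : Finset Pt) {r : ℕ} (C : Fin r → Pt) (s : ℕ) : ℕ :=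
  max (mnX L s) (bnd C s)

-- STATEMENT 6
theorem stmt6 (L : Finset Pt) (hL : IsSPDL L) (r : ℕ) (C : Fin r → Pt)
    (hCL : ∀ k, cellVerts (C k) ⊆ L)
    (h1 : StrictMono fun k => (C k).1) (h2 : StrictMono fun k => (C k).2) :
    ∃ (N : ℕ) (c : ℕ → Pt), IsMaxLatticeChain L N c ∧
      ∀ a : Pt, DescentCell L N c a ↔ ∃ k, C k = a := by
  classical
  have h0L : (0, 0) ∈ L := hL.1
  have hchain := hL.2.2.1
  have hne : L.Nonempty := ⟨(0, 0), h0L⟩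
  set M : Pt := L.sup' hne id with hMdef
  have hMub : ∀ a ∈ L, a ≤ M := fun a ha => Finset.le_sup' id ha
  have hMmem : M ∈ L := by
    rw [hMdef]
    exact Finset.sup'_mem (↑L : Set Pt)
      (fun x hx y hy => (hL.2.1 x hx y hy).1) L hne id (fun i hi => hi)
  set N := M.1 + M.2 with hNdef
  have hrankle : ∀ a ∈ L, a.1 + a.2 ≤ N := by
    intro a ha
    have h := hMub a ha
    exact Nat.add_le_add h.1 h.2
  -- vertices of the cells
  have hv1 : ∀ k, C k ∈ L := fun k => hCL k (by simp [cellVerts])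
  have hv2 : ∀ k, ((C k).1 + 1, (C k).2) ∈ L := fun k => hCL k (by simp [cellVerts])
  have hv3 : ∀ k, ((C k).1, (C k).2 + 1) ∈ L := fun k => hCL k (by simp [cellVerts])
  have hv4 : ∀ k, ((C k).1 + 1, (C k).2 + 1) ∈ L := fun k => hCL k (by simp [cellVerts])
  -- mnX basic facts
  have hmnle : ∀ p : Pt, p ∈ L → ∀ s, p.1 + p.2 = s → mnX L s ≤ p.1 := by
    intro p hp s hs
    exact Nat.sInf_le ⟨p.2, hs, by simpa using hp⟩
  have hrowmem : ∀ s, s ≤ N → (mnX L s, s - mnX L s) ∈ L ∧ mnX L s ≤ s := by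
    intro s hs
    have hch : UnitChain L (0, 0) M := hchain _ h0L _ hMmem (hMub _ h0L)
    obtain ⟨p, hpL, hpr, -, -⟩ := unitChain_point hch (s := s) (by simp) (by simpa using hs)
    have hmem : mnX L s ∈ {x | ∃ y, x + y = s ∧ (x, y) ∈ L} :=
      Nat.sInf_mem ⟨p.1, p.2, hpr, by simpa using hpL⟩
    obtain ⟨y, hy, hyL⟩ := hmem
    have hy' : y = s - mnX L s := by omega
    rw [hy'] at hyL
    exact ⟨hyL, by omega⟩
  have hIn : ∀ s, s ≤ N → ∀ x, mnX L s ≤ x → ∀ p, p ∈ L → p.1 + p.2 = s → x ≤ p.1 →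
      (x, s - x) ∈ L := by
    intro s hs x hx p hp hpr hxp
    obtain ⟨hq, hqle⟩ := hrowmem s hs
    have h := spdl_conv hL hq hp (by simp; omega) (x := x) (by simpa using hx) (by omega)
    simp only at h
    have he : mnX L s + (s - mnX L s) = s := by omega
    rw [he] at h
    exact h
  -- bnd basic facts
  have hgle : ∀ (k : Fin r) s, gfun (C k) s ≤ bnd C s := by
    intro k s; exact Finset.le_sup (f := fun k => gfun (C k) s) (Finset.mem_univ k)
  have hbndle : ∀ s x, (∀ k, gfun (C k) s ≤ x) → bnd C s ≤ x := by
    intro s x h; unfold bnd; exact Finset.sup_le fun k _ => h k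
  -- xc in L
  have hxcL : ∀ s, s ≤ N → (xc L C s, s - xc L C s) ∈ L ∧ xc L C s ≤ s := by
    intro s hs
    rcases le_or_gt (bnd C s) (mnX L s) with h | h
    · have hx : xc L C s = mnX L s := max_eq_left h
      rw [hx]; exact hrowmem s hs
    · have hx : xc L C s = bnd C s := max_eq_right h.le
      have hr0 : 0 < r := by
        by_contra h0
        have hr00 : r = 0 := by omega
        subst hr00
        have : bnd C s = 0 :=
          le_antisymm (hbndle s 0 fun k => (Nat.not_lt_zero _ k.2).elim) (Nat.zero_le _)
        omega
      obtain ⟨k, -, hk⟩ := Finset.exists_mem_eq_sup Finset.univ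
        ⟨⟨0, hr0⟩, Finset.mem_univ _⟩ (fun k => gfun (C k) s)
      have hbk : bnd C s = gfun (C k) s := by unfold bnd; exact hk
      rcases le_or_gt s ((C k).1 + (C k).2 + 1) with hc | hc
      · have hch := hchain _ h0L _ (hv2 k) (by simp)
        obtain ⟨p, hpL, hpr, -, hpb⟩ := unitChain_point hch (s := s)
          (by simp) (by simp; omega)
        have hp2 : p.2 ≤ (C k).2 := by simpa using hpb.2
        have hple : bnd C s ≤ p.1 := by
          rw [hbk]; simp only [gfun]; omega
        rw [hx]
        refine ⟨hIn s hs _ h.le p hpL hpr hple, ?_⟩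
        rw [hbk]; simp only [gfun]; omega
      · have hch := hchain _ (hv4 k) _ hMmem (hMub _ (hv4 k))
        obtain ⟨p, hpL, hpr, hpa, -⟩ := unitChain_point hch (s := s)
          (by simp; omega) (by simpa using hs)
        have hp1 : (C k).1 + 1 ≤ p.1 := by simpa using hpa.1
        have hple : bnd C s ≤ p.1 := by
          rw [hbk]; simp only [gfun]; omega
        rw [hx]
        refine ⟨hIn s hs _ h.le p hpL hpr hple, ?_⟩
        rw [hbk]; simp only [gfun]; omega
  -- step bounds
  have hmnstep : ∀ s, s < N → mnX L s ≤ mnX L (s + 1) ∧ mnX L (s + 1) ≤ mnX L s + 1 := by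
    intro s hsN
    constructor
    · obtain ⟨hp, hple⟩ := hrowmem (s + 1) (by omega)
      have hch := hchain _ h0L _ hp (by simp)
      obtain ⟨q, hqL, hqr, -, hqp⟩ := unitChain_point hch (s := s)
        (by simp) (by simp; omega)
      have hq1 := hmnle q hqL s hqr
      have hq2 : q.1 ≤ mnX L (s + 1) := by simpa using hqp.1
      omega
    · obtain ⟨hq, hqle⟩ := hrowmem s (by omega)
      have hch := hchain _ hq _ hMmem (hMub _ hq)
      obtain ⟨p, hpL, hpr, hqp, -⟩ := unitChain_point hch (s := s + 1)
        (by simp; omega) (by simpa using (by omega : s + 1 ≤ N))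
      have hp1 := hmnle p hpL (s + 1) hpr
      have hp2 : s - mnX L s ≤ p.2 := by simpa using hqp.2
      omega
  have hbstep : ∀ s, bnd C s ≤ bnd C (s + 1) ∧ bnd C (s + 1) ≤ bnd C s + 1 := by
    intro s
    constructor
    · apply hbndle; intro k
      refine le_trans ?_ (hgle k (s + 1))
      simp only [gfun]; omega
    · apply hbndle; intro k
      have := hgle k s
      simp only [gfun] at *; omega
  have hxstep : ∀ s, s < N → xc L C s ≤ xc L C (s + 1) ∧ xc L C (s + 1) ≤ xc L C s + 1 := by
    intro s h
    have ha := hmnstep s h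
    have hb := hbstep s
    simp only [xc]; omega
  -- endpoints
  have hxc0 : xc L C 0 = 0 := by
    have ha : mnX L 0 ≤ 0 := hmnle (0, 0) h0L 0 rfl
    have hb : bnd C 0 ≤ 0 := hbndle 0 0 (fun k => by simp [gfun])
    simp only [xc]; omega
  have hxcN : xc L C N = M.1 := by
    have ha : mnX L N ≤ M.1 := hmnle M hMmem N rfl
    obtain ⟨hp, hple⟩ := hrowmem N le_rfl
    have hub := hMub _ hp
    have hub2 : N - mnX L N ≤ M.2 := by simpa using hub.2
    have hb : bnd C N ≤ M.1 := by
      apply hbndle; intro k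
      have := hMub _ (hv4 k)
      have h41 : (C k).1 + 1 ≤ M.1 := by simpa using this.1
      simp only [gfun]; omega
    simp only [xc]; omega
  refine ⟨N, fun s => (xc L C s, s - xc L C s), ⟨?_, ?_, ?_, ?_⟩, ?_⟩
  · simp [hxc0]
  · intro i hi; exact (hxcL i hi).1
  · intro a ha
    have hM : (xc L C N, N - xc L C N) = M := by
      simp [Prod.ext_iff, hxcN]
      all_goals omega
    show a ≤ (xc L C N, N - xc L C N)
    rw [hM]; exact hMub a ha
  · intro i hiN
    have hst := hxstep i hiN
    have hle := (hxcL i (by omega)).2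
    rcases le_or_gt (xc L C (i + 1)) (xc L C i) with h | h
    · right
      have he : xc L C (i + 1) = xc L C i := by omega
      simp [Prod.ext_iff, Prod.mk_add_mk, he]
      all_goals omega
    · left
      have he : xc L C (i + 1) = xc L C i + 1 := by omega
      simp [Prod.ext_iff, Prod.mk_add_mk, he]
      all_goals omega
  · intro a
    constructor
    · rintro ⟨hav, s, hs2, hcs, hcs1, hcs2⟩
      simp only [Prod.ext_iff] at hcs hcs1 hcs2
      obtain ⟨hxs, hys⟩ := hcs
      obtain ⟨hxs1, hys1⟩ := hcs1
      obtain ⟨hxs2, hys2⟩ := hcs2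
      have hles := (hxcL s (by omega)).2
      have hsr : a.1 + a.2 = s := by omega
      have hvert : (a.1, a.2 + 1) ∈ L := hav (by simp [cellVerts])
      have hmn1 : mnX L (s + 1) ≤ a.1 := hmnle (a.1, a.2 + 1) hvert (s + 1) (by simp; omega)
      have hxdef1 : xc L C (s + 1) = max (mnX L (s + 1)) (bnd C (s + 1)) := rfl
      have hbnd1 : bnd C (s + 1) = a.1 + 1 := by omega
      have hr0 : 0 < r := by
        by_contra h0
        have hr00 : r = 0 := by omega
        subst hr00
        have : bnd C (s + 1) = 0 :=
          le_antisymm (hbndle _ 0 fun k => (Nat.not_lt_zero _ k.2).elim) (Nat.zero_le _)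
        omega
      obtain ⟨k, -, hk⟩ := Finset.exists_mem_eq_sup Finset.univ
        ⟨⟨0, hr0⟩, Finset.mem_univ _⟩ (fun k => gfun (C k) (s + 1))
      have hbk : bnd C (s + 1) = gfun (C k) (s + 1) := by unfold bnd; exact hk
      have hg1 : gfun (C k) (s + 1) = a.1 + 1 := by rw [← hbk, hbnd1]
      simp only [gfun] at hg1
      rcases le_or_gt ((C k).1 + 1) (s + 1 - (C k).2) with hA | hB
      · have hi : (C k).1 = a.1 := by omega
        have hj : (C k).2 ≤ a.2 := by omega
        rcases eq_or_lt_of_le hj with hje | hjl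
        · exact ⟨k, by rw [Prod.ext_iff]; exact ⟨hi, hje⟩⟩
        · exfalso
          have hgs := hgle k s
          have hbs : bnd C s ≤ xc L C s := by unfold xc; exact le_max_right _ _
          simp only [gfun] at hgs
          omega
      · exfalso
        have hg2 := hgle k (s + 2)
        have hbs2 : bnd C (s + 2) ≤ xc L C (s + 2) := by unfold xc; exact le_max_right _ _
        simp only [gfun] at hg2
        omega
    · rintro ⟨k, rfl⟩
      have hmono1 : ∀ {a b : Fin r}, a < b → (C a).1 < (C b).1 := fun h => h1 h
      have hmono2 : ∀ {a b : Fin r}, a < b → (C a).2 < (C b).2 := fun h => h2 h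
      have hs2N : (C k).1 + (C k).2 + 2 ≤ N := by
        have := hrankle _ (hv4 k); omega
      have hblow : ∀ s' v, gfun (C k) s' = v → (∀ k', gfun (C k') s' ≤ v) →
          bnd C s' = v := by
        intro s' v hv hall
        exact le_antisymm (hbndle _ _ hall) (hv ▸ hgle k s')
      have hbA : bnd C ((C k).1 + (C k).2) = (C k).1 := by
        refine hblow _ _ (by simp only [gfun]; omega) ?_
        intro k'
        rcases lt_trichotomy k' k with hlt | heq | hgt
        · have := hmono1 hlt; simp only [gfun]; omega
        · subst heq; simp only [gfun]; omega
        · have := hmono2 hgt; simp only [gfun]; omega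
      have hbB : bnd C ((C k).1 + (C k).2 + 1) = (C k).1 + 1 := by
        refine hblow _ _ (by simp only [gfun]; omega) ?_
        intro k'
        rcases lt_trichotomy k' k with hlt | heq | hgt
        · have := hmono1 hlt; simp only [gfun]; omega
        · subst heq; simp only [gfun]; omega
        · have := hmono2 hgt; simp only [gfun]; omega
      have hbC : bnd C ((C k).1 + (C k).2 + 2) = (C k).1 + 1 := by
        refine hblow _ _ (by simp only [gfun]; omega) ?_
        intro k'
        rcases lt_trichotomy k' k with hlt | heq | hgt
        · have := hmono1 hlt; simp only [gfun]; omega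
        · subst heq; simp only [gfun]; omega
        · have := hmono2 hgt; simp only [gfun]; omega
      have hmA : mnX L ((C k).1 + (C k).2) ≤ (C k).1 := hmnle _ (hv1 k) _ rfl
      have hmB : mnX L ((C k).1 + (C k).2 + 1) ≤ (C k).1 + 1 :=
        hmnle _ (hv2 k) _ (by simp; omega)
      have hmC : mnX L ((C k).1 + (C k).2 + 2) ≤ (C k).1 + 1 :=
        hmnle _ (hv4 k) _ (by simp; omega)
      have hxA : xc L C ((C k).1 + (C k).2) = (C k).1 := by
        have : xc L C ((C k).1 + (C k).2) =
          max (mnX L ((C k).1 + (C k).2)) (bnd C ((C k).1 + (C k).2)) := rfl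
        omega
      have hxB : xc L C ((C k).1 + (C k).2 + 1) = (C k).1 + 1 := by
        have : xc L C ((C k).1 + (C k).2 + 1) =
          max (mnX L ((C k).1 + (C k).2 + 1)) (bnd C ((C k).1 + (C k).2 + 1)) := rfl
        omega
      have hxC : xc L C ((C k).1 + (C k).2 + 2) = (C k).1 + 1 := by
        have : xc L C ((C k).1 + (C k).2 + 2) =
          max (mnX L ((C k).1 + (C k).2 + 2)) (bnd C ((C k).1 + (C k).2 + 2)) := rfl
        omega
      refine ⟨hCL k, (C k).1 + (C k).2, hs2N, ?_, ?_, ?_⟩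
      · simp only [Prod.ext_iff]; omega
      · simp only [Prod.ext_iff]; omega
      · simp only [Prod.ext_iff]; omega
end

section
/- Let P be a parallelogram polyomino and let F = {A_1, …, A_d} be a set of d non-attacking rooks on P. Then there exists a set G = {B_1, …, B_d} of d non-attacking rooks on P with lower-left corners ℓ(B_k) = (i_k, j_k) satisfying i_1 < i_2 < … < i_d and j_1 < j_2 < … < j_d, such that F ∼ G (F and G are equivalent under switches). -/
open scoped Classical

/-! Two cells of a parallelogram polyomino of which one lies weakly northwest of the other
span a rectangle of the polyomino, since the region between two north-east paths is closed
under moving right-and-down from its upper boundary and left-and-up from its lower one. So two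
rooks in northwest–southeast position can always be switched to the southwest–northeast pair
of the same rectangle. By the rearrangement inequality this strictly increases the sum of
`x * y` over the rooks, which is bounded by the same sum over all cells of the polyomino;
hence after finitely many switches no such pair is left, i.e. the rooks form an increasing
chain. -/

namespace IsNEPath

variable {k : ℕ} {f : ℕ → Pt}

lemma fst_le_fst (hf : IsNEPath k f) {m n : ℕ} (hmn : m ≤ n) (hn : n ≤ k) :
    (f m).1 ≤ (f n).1 := by
  induction n, hmn using Nat.le_induction with
  | base => rfl
  | succ n _ ih =>
    rcases hf.2 n (by omega) with h | h <;> simp only [h, Prod.fst_add] <;> omega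

lemma fst_le_fst_add (hf : IsNEPath k f) {m n : ℕ} (hmn : m ≤ n) (hn : n ≤ k) :
    (f n).1 ≤ (f m).1 + (n - m) := by
  induction n, hmn using Nat.le_induction with
  | base => omega
  | succ n _ ih =>
    rcases hf.2 n (by omega) with h | h <;> simp only [h, Prod.fst_add] <;> omega

lemma fst_le_of_le (hf : IsNEPath k f) {a b p q : ℕ} (hab : a + b ≤ k) (hpq : p + q ≤ k)
    (h : (f (a + b)).1 ≤ a) (hp : a ≤ p) (hq : q ≤ b) : (f (p + q)).1 ≤ p := by
  rcases le_total (p + q) (a + b) with h' | h'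
  · exact (hf.fst_le_fst h' hab).trans (h.trans hp)
  · have := hf.fst_le_fst_add h' hpq
    omega

lemma le_fst_of_le (hf : IsNEPath k f) {a b p q : ℕ} (hab : a + b ≤ k) (hpq : p + q ≤ k)
    (h : a ≤ (f (a + b)).1) (hp : p ≤ a) (hq : b ≤ q) : p ≤ (f (p + q)).1 := by
  rcases le_total (p + q) (a + b) with h' | h'
  · have := hf.fst_le_fst_add h' hab
    omega
  · exact hp.trans (h.trans (hf.fst_le_fst h' hpq))

end IsNEPath

def HasNWSERects (P : Finset Pt) : Prop :=
  ∀ i j s t : ℕ, (i, j) ∈ P → (s, t) ∈ P → i ≤ s → t ≤ j →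
    intervalCells (i, t) (s + 1, j + 1) ⊆ P

lemma HasNWSERects.mem_of_le {P : Finset Pt} (hP : HasNWSERects P) {a b : Pt} (ha : a ∈ P)
    (hb : b ∈ P) (h₁ : a.1 ≤ b.1) (h₂ : b.2 ≤ a.2) {x : Pt} (hx₁ : a.1 ≤ x.1) (hx₁' : x.1 ≤ b.1)
    (hx₂ : b.2 ≤ x.2) (hx₂' : x.2 ≤ a.2) : x ∈ P :=
  hP a.1 a.2 b.1 b.2 ha hb h₁ h₂ <| by
    simp only [intervalCells, Finset.mem_product, Finset.mem_Ico]
    omega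

lemma ParaData.hasNWSERects {P : Finset Pt} {k : ℕ} {u l : ℕ → Pt}
    (hP : ParaData P k u l) : HasNWSERects P := by
  obtain ⟨-, hu, hl, hend, -, -, -, hmem⟩ := hP
  intro i j s t hij hst his htj
  obtain ⟨hNW, huNW, -⟩ := (hmem (i, j)).1 hij (i, j + 1) (by simp [cellVerts])
  obtain ⟨hSE, -, hlSE⟩ := (hmem (s, t)).1 hst (s + 1, t) (by simp [cellVerts])
  dsimp only at hNW huNW hSE hlSE
  have hk : s + 1 + (j + 1) ≤ k := by
    have hu_end := hu.fst_le_fst_add hNW le_rfl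
    have hl_end := hl.fst_le_fst hSE le_rfl
    rw [hend] at hu_end
    omega
  have hvert : ∀ p q, i ≤ p → p ≤ s + 1 → t ≤ q → q ≤ j + 1 →
      p + q ≤ k ∧ (u (p + q)).1 ≤ p ∧ p ≤ (l (p + q)).1 := fun p q hp₁ hp₂ hq₁ hq₂ =>
    ⟨by omega, hu.fst_le_of_le hNW (by omega) huNW hp₁ hq₂,
      hl.le_fst_of_le hSE (by omega) hlSE hp₂ hq₁⟩
  rintro ⟨x, y⟩ hxy
  simp only [intervalCells, Finset.mem_product, Finset.mem_Ico] at hxy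
  refine (hmem (x, y)).2 fun v hv => ?_
  simp only [cellVerts, Finset.mem_insert, Finset.mem_singleton] at hv
  rcases hv with rfl | rfl | rfl | rfl <;>
    exact hvert _ _ (by omega) (by omega) (by omega) (by omega)

def switchAt (F : Finset Pt) (a b : Pt) : Finset Pt :=
  F \ {a, b} ∪ {(a.1, b.2), (b.1, a.2)}

def rookWeight (F : Finset Pt) : ℕ := ∑ x ∈ F, x.1 * x.2

section Switch

variable {P F : Finset Pt} {a b : Pt}

lemma NonAttacking.switchAt (hF : NonAttacking P F) (ha : a ∈ F) (hb : b ∈ F)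
    (h₁ : a.1 < b.1) (h₂ : b.2 < a.2) (hSW : (a.1, b.2) ∈ P) (hNE : (b.1, a.2) ∈ P) :
    NonAttacking P (switchAt F a b) := by
  have hothers : ∀ x ∈ F \ {a, b}, x.1 ≠ a.1 ∧ x.2 ≠ a.2 ∧ x.1 ≠ b.1 ∧ x.2 ≠ b.2 := by
    intro x hx
    simp only [Finset.mem_sdiff, Finset.mem_insert, Finset.mem_singleton, not_or] at hx
    exact ⟨(hF.2 x hx.1 a ha hx.2.1).1, (hF.2 x hx.1 a ha hx.2.1).2,
      (hF.2 x hx.1 b hb hx.2.2).1, (hF.2 x hx.1 b hb hx.2.2).2⟩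
  refine ⟨Finset.union_subset ((Finset.sdiff_subset).trans hF.1) ?_, ?_⟩
  · simp [Finset.insert_subset_iff, hSW, hNE]
  intro x hx y hy hxy
  simp only [_root_.switchAt, Finset.mem_union, Finset.mem_insert, Finset.mem_singleton] at hx hy
  rcases hx with hx | rfl | rfl <;> rcases hy with hy | rfl | rfl
  · exact hF.2 x (Finset.mem_sdiff.1 hx).1 y (Finset.mem_sdiff.1 hy).1 hxy
  all_goals first
    | exact absurd rfl hxy
    | (have := hothers x hx; constructor <;> dsimp only <;> omega)
    | (have := hothers y hy; constructor <;> dsimp only <;> omega)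
    | (constructor <;> dsimp only <;> omega)

lemma disjoint_switchAt (hF : NonAttacking P F) (ha : a ∈ F) (hb : b ∈ F) (h₂ : b.2 < a.2) :
    Disjoint (F \ {a, b}) {(a.1, b.2), (b.1, a.2)} := by
  rw [Finset.disjoint_right]
  intro x hx hxF
  replace hxF := (Finset.mem_sdiff.1 hxF).1
  simp only [Finset.mem_insert, Finset.mem_singleton] at hx
  rcases hx with rfl | rfl
  · exact (hF.2 _ hxF a ha fun h => h₂.ne (Prod.ext_iff.1 h).2).1 rfl
  · exact (hF.2 _ hxF b hb fun h => h₂.ne' (Prod.ext_iff.1 h).2).1 rfl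

lemma card_switchAt (hF : NonAttacking P F) (ha : a ∈ F) (hb : b ∈ F) (h₁ : a.1 < b.1)
    (h₂ : b.2 < a.2) : (switchAt F a b).card = F.card := by
  have hab : a ≠ b := fun h => h₁.ne (Prod.ext_iff.1 h).1
  have hnew : ((a.1, b.2) : Pt) ≠ (b.1, a.2) := fun h => h₁.ne (Prod.ext_iff.1 h).1
  have hsub : ({a, b} : Finset Pt) ⊆ F :=
    Finset.insert_subset ha (Finset.singleton_subset_iff.2 hb)
  have := Finset.card_le_card hsub
  rw [Finset.card_pair hab] at this
  rw [switchAt, Finset.card_union_of_disjoint (disjoint_switchAt hF ha hb h₂),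
    Finset.card_sdiff_of_subset hsub, Finset.card_pair hab, Finset.card_pair hnew]
  omega

lemma switchStep_switchAt (hP : HasNWSERects P) (hF : NonAttacking P F) (ha : a ∈ F)
    (hb : b ∈ F) (h₁ : a.1 < b.1) (h₂ : b.2 < a.2) : SwitchStep P F (switchAt F a b) :=
  ⟨(a.1, b.2), (b.1 + 1, a.2 + 1),
    ⟨by omega, by omega, hP a.1 a.2 b.1 b.2 (hF.1 ha) (hF.1 hb) h₁.le h₂.le⟩,
    Or.inr ⟨by simpa using ha, by simpa using hb, by simp [switchAt]⟩⟩

lemma rookWeight_lt_rookWeight_switchAt (hF : NonAttacking P F) (ha : a ∈ F) (hb : b ∈ F)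
    (h₁ : a.1 < b.1) (h₂ : b.2 < a.2) :
    rookWeight F < rookWeight (switchAt F a b) := by
  have hab : a ≠ b := fun h => h₁.ne (Prod.ext_iff.1 h).1
  have hnew : ((a.1, b.2) : Pt) ≠ (b.1, a.2) := fun h => h₁.ne (Prod.ext_iff.1 h).1
  have hsub : ({a, b} : Finset Pt) ⊆ F :=
    Finset.insert_subset ha (Finset.singleton_subset_iff.2 hb)
  rw [rookWeight, rookWeight, switchAt, Finset.sum_union (disjoint_switchAt hF ha hb h₂),
    ← Finset.sum_sdiff hsub, Finset.sum_pair hab, Finset.sum_pair hnew]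
  have := mul_add_mul_lt_mul_add_mul h₁ h₂
  dsimp only
  omega

end Switch

lemma HasNWSERects.exists_chain_eqvGen {P F : Finset Pt} (hP : HasNWSERects P)
    (hF : NonAttacking P F) :
    ∃ G : Finset Pt, NonAttacking P G ∧ G.card = F.card ∧
      (∀ a ∈ G, ∀ b ∈ G, a ≠ b → (a.1 < b.1 ∧ a.2 < b.2) ∨ (b.1 < a.1 ∧ b.2 < a.2)) ∧
      Relation.EqvGen (SwitchStep P) F G := by
  induction hn : rookWeight P - rookWeight F using Nat.strong_induction_on generalizing F with
  | _ n ih =>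
  by_cases hinv : ∃ a ∈ F, ∃ b ∈ F, a.1 < b.1 ∧ b.2 < a.2
  · obtain ⟨a, ha, b, hb, h₁, h₂⟩ := hinv
    have hcorner := fun x : Pt => hP.mem_of_le (x := x) (hF.1 ha) (hF.1 hb) h₁.le h₂.le
    have hF' := hF.switchAt ha hb h₁ h₂ (hcorner _ le_rfl h₁.le le_rfl h₂.le)
      (hcorner _ h₁.le le_rfl h₂.le le_rfl)
    have hlt := rookWeight_lt_rookWeight_switchAt hF ha hb h₁ h₂
    have hle : rookWeight (switchAt F a b) ≤ rookWeight P := Finset.sum_le_sum_of_subset hF'.1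
    obtain ⟨G, hG, hcard, hchain, hFG⟩ := ih _ (by omega) hF' rfl
    exact ⟨G, hG, hcard.trans (card_switchAt hF ha hb h₁ h₂), hchain,
      .trans _ _ _ (.rel _ _ (switchStep_switchAt hP hF ha hb h₁ h₂)) hFG⟩
  · push Not at hinv
    refine ⟨F, hF, rfl, fun a ha b hb hab => ?_, .refl F⟩
    have := hF.2 a ha b hb hab
    have := hinv a ha b hb
    have := hinv b hb a ha
    omega

theorem stmt7 (P : Finset Pt) (hP : IsParaPoly P) (F : Finset Pt)
    (hF : NonAttacking P F) :
    ∃ G : Finset Pt, NonAttacking P G ∧ G.card = F.card ∧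
      (∀ a ∈ G, ∀ b ∈ G, a ≠ b →
        (a.1 < b.1 ∧ a.2 < b.2) ∨ (b.1 < a.1 ∧ b.2 < a.2)) ∧
      Relation.EqvGen (SwitchStep P) F G := by
  obtain ⟨k, u, l, hPkul⟩ := hP
  exact hPkul.hasNWSERects.exists_chain_eqvGen hF
end

section
/- Let P be a parallelogram polyomino with min V(P) = (0,0). Then there exists a unique maximal rectangle R of P with (0,0) ∈ V(R). Moreover, the cell of P with lower-left corner (0,0) belongs to no maximal rectangle of P other than R; in particular R contains a single rectangle. -/
open scoped Classical

/-! A parallelogram polyomino contains, together with a cell `A` and a cell `B` weakly south-east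
of it, the whole rectangle spanned by `A` and `B`: since both coordinates of a lattice path are
monotone, the condition imposed by the upper boundary path passes from `A` to the cells south-east
of it, and that imposed by the lower path from `B` to the cells north-west of it. Applied to the
last cell of the bottom row and the top cell of the left column, this shows that the rectangles
of `P` with lower-left corner `(0,0)` have a greatest element `[(0,0), b₀]`. A maximal rectangle
with vertex `(0,0)` must start at `(0,0)`, hence is `[(0,0), b₀]`, and so the origin cell is
single. -/

lemma mem_cellVerts {a v : Pt} : v ∈ cellVerts a ↔ ∃ i ≤ 1, ∃ j ≤ 1, v = (a.1 + i, a.2 + j) := by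
  simp only [cellVerts, Finset.mem_insert, Finset.mem_singleton]
  constructor
  · rintro (rfl | rfl | rfl | rfl)
    exacts [⟨0, zero_le_one, 0, zero_le_one, rfl⟩, ⟨1, le_rfl, 0, zero_le_one, rfl⟩,
      ⟨0, zero_le_one, 1, le_rfl, rfl⟩, ⟨1, le_rfl, 1, le_rfl, rfl⟩]
  · rintro ⟨i, hi, j, hj, rfl⟩
    interval_cases i <;> interval_cases j <;> simp

lemma mem_Icc_of_mem_intervalCells {a b c : Pt} (h : c ∈ intervalCells a b) : c ∈ Set.Icc a b := by
  simp only [intervalCells, Finset.mem_product, Finset.mem_Ico] at h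
  exact ⟨⟨h.1.1, h.2.1⟩, ⟨h.1.2.le, h.2.2.le⟩⟩

lemma intervalCells_unit (a : Pt) : intervalCells a (a.1 + 1, a.2 + 1) = {a} := by
  simp [intervalCells]

namespace IsNEPath

variable {k : ℕ} {f : ℕ → Pt}

lemma fst_add_snd (hf : IsNEPath k f) {i : ℕ} (hi : i ≤ k) : (f i).1 + (f i).2 = i := by
  induction i with
  | zero => simp [hf.1]
  | succ i ih =>
    have := ih (by omega)
    rcases hf.2 i hi with h | h <;> rw [h] <;> simp only [Prod.fst_add, Prod.snd_add] <;> omega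

lemma monotoneOn (hf : IsNEPath k f) : MonotoneOn f (Set.Iic k) := by
  intro i _ j (hj : j ≤ k) hij
  induction j, hij using Nat.le_induction with
  | base => exact le_rfl
  | succ j _ ih =>
    refine (ih (by omega)).trans ?_
    rcases hf.2 j hj with h | h <;> rw [h] <;> exact le_self_add

lemma fst_le_of_fst_le (hf : IsNEPath k f) {x y x' y' : ℕ} (h : (f (x + y)).1 ≤ x)
    (hx : x ≤ x') (hy : y' ≤ y) (hk : x + y ≤ k) (hk' : x' + y' ≤ k) :
    (f (x' + y')).1 ≤ x' := by
  have := hf.fst_add_snd hk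
  have := hf.fst_add_snd hk'
  rcases le_total (x' + y') (x + y) with hs | hs
  · have := (hf.monotoneOn hk' hk hs).1
    omega
  · have := (hf.monotoneOn hk hk' hs).2
    omega

lemma le_fst_of_le_fst (hf : IsNEPath k f) {x y x' y' : ℕ} (h : x ≤ (f (x + y)).1)
    (hx : x' ≤ x) (hy : y ≤ y') (hk : x + y ≤ k) (hk' : x' + y' ≤ k) :
    x' ≤ (f (x' + y')).1 := by
  have := hf.fst_add_snd hk
  have := hf.fst_add_snd hk'
  rcases le_total (x' + y') (x + y) with hs | hs
  · have := (hf.monotoneOn hk' hk hs).2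
    omega
  · have := (hf.monotoneOn hk hk' hs).1
    omega

end IsNEPath

def NWSEConvex (P : Finset Pt) : Prop :=
  ∀ ⦃i j i' j' x y : ℕ⦄, (i, j) ∈ P → (i', j') ∈ P →
    i ≤ x → x ≤ i' → j' ≤ y → y ≤ j → (x, y) ∈ P

namespace ParaData

variable {P : Finset Pt} {k : ℕ} {u l : ℕ → Pt}

lemma mem_iff (h : ParaData P k u l) {c : Pt} :
    c ∈ P ↔ ∀ i ≤ 1, ∀ j ≤ 1, c.1 + i + (c.2 + j) ≤ k ∧
      (u (c.1 + i + (c.2 + j))).1 ≤ c.1 + i ∧ c.1 + i ≤ (l (c.1 + i + (c.2 + j))).1 := by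
  obtain ⟨-, -, -, -, -, -, -, hmem⟩ := h
  rw [hmem c]
  simp only [mem_cellVerts]
  constructor
  · intro hc i hi j hj
    exact hc _ ⟨i, hi, j, hj, rfl⟩
  · rintro hc v ⟨i, hi, j, hj, rfl⟩
    exact hc i hi j hj

lemma lt_end (h : ParaData P k u l) {c : Pt} (hc : c ∈ P) : c.1 < (u k).1 ∧ c.2 < (u k).2 := by
  obtain ⟨hk₁, -, hl₁⟩ := h.mem_iff.1 hc 1 le_rfl 0 zero_le_one
  obtain ⟨hk₂, hu₂, -⟩ := h.mem_iff.1 hc 0 zero_le_one 1 le_rfl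
  obtain ⟨-, hu, hl, hend, -⟩ := h
  have hl_mono := (hl.monotoneOn hk₁ (le_refl k) hk₁).1
  have hu_mono := (hu.monotoneOn hk₂ (le_refl k) hk₂).2
  have := hu.fst_add_snd hk₂
  rw [← hend] at hl_mono
  omega

lemma two_le (h : ParaData P k u l) : 2 ≤ k := by
  obtain ⟨-, hu, -, -, -, -, ⟨c, hc⟩, -⟩ := id h
  have := h.lt_end hc
  have := hu.fst_add_snd le_rfl
  omega

lemma apply_one (h : ParaData P k u l) : u 1 = (0, 1) ∧ l 1 = (1, 0) := by
  have hk : 1 < k := h.two_le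
  obtain ⟨-, hu, hl, -, hle, hne, -⟩ := h
  have := hle 1 hk.le
  have := hne 1 one_pos hk
  rcases hu.2 0 (by omega) with hu₁ | hu₁ <;> rcases hl.2 0 (by omega) with hl₁ | hl₁ <;>
    simp_all [hu.1, hl.1]

lemma origin_mem (h : ParaData P k u l) : (0, 0) ∈ P := by
  obtain ⟨hu₁, hl₁⟩ := h.apply_one
  have hk := h.two_le
  rw [h.mem_iff]
  obtain ⟨-, hu, hl, -⟩ := h
  have hu₂ : (u (1 + 1)).1 ≤ 1 :=
    hu.fst_le_of_fst_le (x := 0) (y := 1) (by simp [hu₁]) zero_le_one le_rfl (by omega) hk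
  have hl₂ : 1 ≤ (l (1 + 1)).1 :=
    hl.le_fst_of_le_fst (x := 1) (y := 0) (by simp [hl₁]) le_rfl zero_le_one (by omega) hk
  intro i hi j hj
  interval_cases i <;> interval_cases j <;> simp [hu.1, hl.1, hu₁, hl₁, hu₂, hl₂] <;> omega

lemma nwseConvex (h : ParaData P k u l) : NWSEConvex P := by
  intro i j i' j' x y hA hB hix hxi hjy hyj
  have := h.lt_end hA
  have := h.lt_end hB
  rw [h.mem_iff] at hA hB ⊢
  obtain ⟨-, hu, hl, -⟩ := h
  have := hu.fst_add_snd le_rfl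
  intro a ha b hb
  obtain ⟨hAk, hAu, -⟩ := hA a ha b hb
  obtain ⟨hBk, -, hBl⟩ := hB a ha b hb
  have hk : x + a + (y + b) ≤ k := by omega
  exact ⟨hk, hu.fst_le_of_fst_le hAu (by omega) (by omega) hAk hk,
    hl.le_fst_of_le_fst hBl (by omega) (by omega) hBk hk⟩

end ParaData

section OriginRect

variable {P : Finset Pt} {b₀ : Pt}

lemma NWSEConvex.exists_isGreatest_innerInterval (hP : NWSEConvex P) (hO : (0, 0) ∈ P) :
    ∃ b₀, IsGreatest {b | IsInnerInterval P (0, 0) b} b₀ := by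
  obtain ⟨x₀, hx₀, hx₀_max⟩ : ∃ x₀, (x₀, 0) ∈ P ∧ ∀ x, (x, 0) ∈ P → x ≤ x₀ :=
    ⟨_, Nat.findGreatest_spec (P := fun x => (x, 0) ∈ P) (Nat.zero_le _) hO,
      fun _ h => Nat.le_findGreatest (Finset.le_sup (f := Prod.fst) h) h⟩
  obtain ⟨y₀, hy₀, hy₀_max⟩ : ∃ y₀, (0, y₀) ∈ P ∧ ∀ y, (0, y) ∈ P → y ≤ y₀ :=
    ⟨_, Nat.findGreatest_spec (P := fun y => (0, y) ∈ P) (Nat.zero_le _) hO,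
      fun _ h => Nat.le_findGreatest (Finset.le_sup (f := Prod.snd) h) h⟩
  refine ⟨(x₀ + 1, y₀ + 1), ⟨x₀.succ_pos, y₀.succ_pos, ?_⟩, ?_⟩
  · rintro ⟨x, y⟩ hc
    simp only [intervalCells, Finset.mem_product, Finset.mem_Ico] at hc
    exact hP hy₀ hx₀ x.zero_le (by omega) y.zero_le (by omega)
  · rintro ⟨x, y⟩ ⟨hx, hy, hsub⟩
    have hx' := hx₀_max (x - 1) (hsub (by simp [intervalCells]; omega))
    have hy' := hy₀_max (y - 1) (hsub (by simp [intervalCells]; omega))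
    exact Prod.mk_le_mk.2 ⟨by omega, by omega⟩

variable (hb₀ : IsGreatest {b | IsInnerInterval P (0, 0) b} b₀)
include hb₀

lemma maximalRect_of_isGreatest : MaximalRect P (0, 0) b₀ := by
  refine ⟨hb₀.1, fun a b hab ha hb => ?_⟩
  obtain rfl : a = (0, 0) := le_bot_iff.1 ha
  exact ⟨rfl, le_antisymm (hb₀.2 hab) hb⟩

lemma eq_of_maximalRect_of_mem_Icc {a b : Pt} (hab : MaximalRect P a b)
    (h0 : (0, 0) ∈ Set.Icc a b) : a = (0, 0) ∧ b = b₀ := by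
  obtain rfl : a = (0, 0) := le_bot_iff.1 h0.1
  exact ⟨rfl, (hab.2 _ _ hb₀.1 le_rfl (hb₀.2 hab.1)).2.symm⟩

lemma singleRectOf_origin_cell : SingleRectOf P (0, 0) b₀ (0, 0) (1, 1) := by
  obtain ⟨hx, hy, hsub⟩ := hb₀.1
  refine ⟨⟨one_pos, one_pos, ?_⟩, le_rfl, Prod.mk_le_mk.2 ⟨hx, hy⟩, ?_⟩
  · rw [intervalCells_unit]
    exact Finset.singleton_subset_iff.2 (hsub (by simp [intervalCells, hx, hy]))
  · intro a b hab hne c hc hc'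
    rw [intervalCells_unit, Finset.mem_singleton] at hc
    subst hc
    exact hne (eq_of_maximalRect_of_mem_Icc hb₀ hab (mem_Icc_of_mem_intervalCells hc'))

end OriginRect

theorem stmt8 (P : Finset Pt) (hP : IsParaPoly P) :
    ∃ b₀ : Pt, MaximalRect P (0, 0) b₀ ∧
      (∀ a b : Pt, MaximalRect P a b → (0, 0) ∈ Set.Icc a b → a = (0, 0) ∧ b = b₀) ∧
      (∀ a b : Pt, MaximalRect P a b → (0, 0) ∈ intervalCells a b →
        a = (0, 0) ∧ b = b₀) ∧
      ∃ sa sb : Pt, SingleRectOf P (0, 0) b₀ sa sb := by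
  obtain ⟨k, u, l, hP⟩ := hP
  obtain ⟨b₀, hb₀⟩ := hP.nwseConvex.exists_isGreatest_innerInterval hP.origin_mem
  have huniq := fun a b => eq_of_maximalRect_of_mem_Icc hb₀ (a := a) (b := b)
  exact ⟨b₀, maximalRect_of_isGreatest hb₀, huniq,
    fun a b hab h0 => huniq a b hab (mem_Icc_of_mem_intervalCells h0),
    _, _, singleRectOf_origin_cell hb₀⟩
end

section
/- Let P be a parallelogram polyomino with min V(P) = (0,0). Then the join-irreducible elements of the lattice V(P) are exactly the minima of the maximal horizontal edge intervals of P and the minima of the maximal vertical edge intervals of P, excluding the vertex (0,0). Moreover, the minima h_1, …, h_n of the maximal horizontal edge intervals other than the one through (0,0) form a chain h_1 ≤ h_2 ≤ … ≤ h_n in V(P), and likewise the minima v_1, …, v_m of the maximal vertical edge intervals other than the one through (0,0) form a chain v_1 ≤ v_2 ≤ … ≤ v_m; these are two maximal chains of the poset of join-irreducible elements. -/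
open scoped Classical

/-!
The vertex set `V(P)` is the set of lattice points between the two boundary paths of `P`. Its
rows are intervals with at least two points, and every unit segment joining two vertices in a
row is an edge of a cell, so the minima of the maximal horizontal edge intervals are exactly the
leftmost points of the rows of `V(P)`. A point `a ≠ (0,0)` of `V(P)` is join-irreducible iff it
is leftmost in its row or lowest in its column: otherwise it is the join of a point to its left
and a point below it. The leftmost points of higher rows lie weakly further right, so they form
a chain. A join-irreducible point `a` that is not leftmost in its row is lowest in its column,
and then the row above `a` reaches further left than `a`, so its leftmost point is incomparable
with `a`. The vertical statements follow by transposing `P`.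
-/

def IsRowMin (L : Finset Pt) (a : Pt) : Prop := ∀ x, (x, a.2) ∈ L → a.1 ≤ x

def IsColMin (L : Finset Pt) (a : Pt) : Prop := ∀ y, (a.1, y) ∈ L → a.2 ≤ y

theorem joinIrred_iff {L : Finset Pt} {a : Pt} :
    JoinIrred L a ↔ a ∈ L ∧ a ≠ (0, 0) ∧ (IsRowMin L a ∨ IsColMin L a) := by
  refine and_congr_right fun _ => and_congr_right fun _ => ⟨fun h => ?_, ?_⟩
  · by_contra! hmin
    obtain ⟨⟨x, hx, hxa⟩, ⟨y, hy, hya⟩⟩ : (∃ x, (x, a.2) ∈ L ∧ x < a.1) ∧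
        ∃ y, (a.1, y) ∈ L ∧ y < a.2 := by
      simpa [IsRowMin, IsColMin] using hmin
    rcases h _ hy _ hx (Prod.ext (by simp; omega) (by simp; omega)) with h | h <;>
      simp [Prod.ext_iff] at h <;> omega
  · rintro hmin ⟨b₁, b₂⟩ hb ⟨c₁, c₂⟩ hc rfl
    simp only [Prod.mk_sup_mk, Prod.mk.injEq, IsRowMin, IsColMin] at hmin ⊢
    rcases hmin with h | h
    · rcases max_choice b₂ c₂ with e | e <;> rw [e] at h
      · have := h b₁ hb; omega
      · have := h c₁ hc; omega
    · rcases max_choice b₁ c₁ with e | e <;> rw [e] at h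
      · have := h b₂ hb; omega
      · have := h c₂ hc; omega

theorem exists_isRowMin {L : Finset Pt} {x y : ℕ} (h : (x, y) ∈ L) :
    ∃ a ∈ L, IsRowMin L a ∧ a.2 = y ∧ a.1 ≤ x := by
  have hex : ∃ x, (x, y) ∈ L := ⟨x, h⟩
  exact ⟨(Nat.find hex, y), Nat.find_spec hex, fun _ => Nat.find_min' hex, rfl,
    Nat.find_min' hex h⟩

theorem maxChainIn_of_exists_incomparable {J c : Set Pt} (hcJ : c ⊆ J)
    (hc : IsChain (· ≤ ·) c) (hinc : ∀ a ∈ J, a ∉ c → ∃ b ∈ c, ¬a ≤ b ∧ ¬b ≤ a) :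
    MaxChainIn J c := by
  refine ⟨hcJ, hc, fun c' hc'J hc' hcc' => hcc'.antisymm fun a ha => ?_⟩
  by_contra hac
  obtain ⟨b, hb, hab, hba⟩ := hinc a (hc'J ha) hac
  exact (hc'.total ha (hcc' hb)).elim hab hba

theorem MaxChainIn.of_preimage_swap {J c : Set Pt}
    (h : MaxChainIn (Prod.swap ⁻¹' J) (Prod.swap ⁻¹' c)) : MaxChainIn J c := by
  obtain ⟨hcJ, hc, hmax⟩ := h
  have hswap : ∀ s : Set Pt, Prod.swap ⁻¹' (Prod.swap ⁻¹' s) = s := fun s => by ext; simp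
  have hchain : ∀ {s : Set Pt}, IsChain (· ≤ ·) s → IsChain (· ≤ ·) (Prod.swap ⁻¹' s) :=
    fun hs => hs.preimage _ _ _ Prod.swap_injective fun _ _ => Prod.swap_le_swap.1
  refine ⟨?_, hswap c ▸ hchain hc, fun c' hc'J hc' hcc' => ?_⟩
  · simpa only [hswap] using Set.preimage_mono (f := Prod.swap) hcJ
  · simpa only [hswap] using congrArg (Prod.swap ⁻¹' ·)
      (hmax _ (Set.preimage_mono hc'J) (hchain hc') (Set.preimage_mono hcc'))

def IsMaxRun (E : ℕ → Prop) (i m : ℕ) : Prop :=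
  i < m ∧ (∀ r, i ≤ r → r < m → E r) ∧
  ∀ i' m', i' < m' → (∀ r, i' ≤ r → r < m' → E r) → i' ≤ i → m ≤ m' → i' = i ∧ m' = m

theorem exists_isMaxRun_iff {S : Set ℕ} (hS : S.OrdConnected) (hbdd : BddAbove S) {i : ℕ} :
    (∃ m, IsMaxRun (fun r => r ∈ S ∧ r + 1 ∈ S) i m) ↔ i ∈ S ∧ i + 1 ∈ S ∧ ∀ r ∈ S, i ≤ r := by
  have hrun : ∀ {a b}, a ∈ S → b ∈ S → ∀ r, a ≤ r → r < b → r ∈ S ∧ r + 1 ∈ S :=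
    fun ha hb r h₁ h₂ => ⟨hS.out ha hb ⟨h₁, h₂.le⟩, hS.out ha hb ⟨by omega, h₂⟩⟩
  have hend : ∀ {a b}, (∀ r, a ≤ r → r < b → r ∈ S ∧ r + 1 ∈ S) → a < b → b ∈ S :=
    fun {a b} h hab => by
      simpa [Nat.sub_add_cancel (by omega : 1 ≤ b)] using (h (b - 1) (by omega) (by omega)).2
  constructor
  · rintro ⟨m, him, hrun', hmax⟩
    refine ⟨(hrun' i le_rfl him).1, (hrun' i le_rfl him).2, fun r hr => le_of_not_gt fun hri => ?_⟩
    have := hmax r m (by omega) (hrun hr (hend hrun' him)) hri.le le_rfl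
    omega
  · rintro ⟨hi, hi1, hmin⟩
    have hle : ∀ r ∈ S, r ≤ sSup S := fun r hr => le_csSup hbdd hr
    refine ⟨sSup S, by linarith [hle _ hi1], hrun hi (Nat.sSup_mem ⟨i, hi⟩ hbdd),
      fun i' m' h h' hi' hm' => ?_⟩
    have := hmin i' (h' i' le_rfl h).1
    have := hle m' (hend h' h)
    omega

def IsCellsOf (P : Finset Pt) (R : Set Pt) : Prop := ∀ c, c ∈ P ↔ ∀ v ∈ cellVerts c, v ∈ R

theorem mem_image_swap {s : Finset Pt} {a : Pt} : a ∈ s.image Prod.swap ↔ a.swap ∈ s := by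
  obtain ⟨x, y⟩ := a
  simp [and_comm]

theorem cellVerts_swap (c : Pt) : cellVerts c.swap = (cellVerts c).image Prod.swap := by
  simp [cellVerts, Finset.image_insert, Finset.insert_comm]

theorem vertexSet_image_swap (P : Finset Pt) :
    vertexSet (P.image Prod.swap) = (vertexSet P).image Prod.swap := by
  simp only [vertexSet, Finset.image_biUnion, Finset.biUnion_image, cellVerts_swap]

theorem isCellsOf_image_swap {P : Finset Pt} {R : Set Pt} (h : IsCellsOf P R) :
    IsCellsOf (P.image Prod.swap) (Prod.swap ⁻¹' R) := fun c => by
  rw [mem_image_swap, h, cellVerts_swap, Finset.forall_mem_image]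
  rfl

theorem isRowMin_image_swap {L : Finset Pt} {a : Pt} :
    IsRowMin (L.image Prod.swap) a ↔ IsColMin L a.swap := by
  simp only [IsRowMin, IsColMin, mem_image_swap, Prod.swap_prod_mk, Prod.fst_swap, Prod.snd_swap]

theorem isColMin_image_swap {L : Finset Pt} {a : Pt} :
    IsColMin (L.image Prod.swap) a ↔ IsRowMin L a.swap := by
  simp only [IsRowMin, IsColMin, mem_image_swap, Prod.swap_prod_mk, Prod.fst_swap, Prod.snd_swap]

theorem joinIrred_image_swap {L : Finset Pt} {a : Pt} :
    JoinIrred (L.image Prod.swap) a ↔ JoinIrred L a.swap := by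
  rw [joinIrred_iff, joinIrred_iff, mem_image_swap, isRowMin_image_swap, isColMin_image_swap,
    or_comm, Ne, Ne, Prod.swap_eq_iff_eq_swap]
  rfl

theorem mem_HMins_image_swap {P : Finset Pt} {a : Pt} :
    a ∈ HMins (P.image Prod.swap) ↔ a.swap ∈ VMins P := by
  have : (fun r => HEdge (P.image Prod.swap) r a.2) = fun r => VEdge P a.2 r := by
    funext r
    simp only [HEdge, VEdge, mem_image_swap, Prod.swap_prod_mk]
  change (∃ m, IsMaxRun (fun r => HEdge _ r a.2) a.1 m) ↔
    ∃ m, IsMaxRun (fun r => VEdge P a.2 r) a.1 m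
  rw [this]

theorem add_one_mem_of_isRowMin {P : Finset Pt} {a : Pt} (ha : a ∈ vertexSet P)
    (hmin : IsRowMin (vertexSet P) a) : (a.1 + 1, a.2) ∈ vertexSet P := by
  obtain ⟨c, hc, hac⟩ := Finset.mem_biUnion.1 ha
  have hV : ∀ v ∈ cellVerts c, v ∈ vertexSet P := fun v hv => Finset.mem_biUnion.2 ⟨c, hc, hv⟩
  simp only [cellVerts, Finset.mem_insert, Finset.mem_singleton, forall_eq_or_imp,
    forall_eq] at hac hV
  obtain ⟨h₀, h₁, h₂, h₃⟩ := hV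
  rcases hac with rfl | rfl | rfl | rfl
  · exact h₁
  · have := hmin _ h₀; simp at this
  · exact h₃
  · have := hmin _ h₂; simp at this

namespace IsNEPath

variable {k : ℕ} {p : ℕ → Pt}

theorem rank (hp : IsNEPath k p) {i : ℕ} (hi : i ≤ k) : (p i).1 + (p i).2 = i := by
  induction i with
  | zero => simp [hp.1]
  | succ i ih => rcases hp.2 i (by omega) with h | h <;> simp [h] <;> omega

theorem le_of_le (hp : IsNEPath k p) {i j : ℕ} (hij : i ≤ j) (hj : j ≤ k) : p i ≤ p j := by
  induction j, hij using Nat.le_induction with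
  | base => rfl
  | succ j _ ih =>
    refine (ih (by omega)).trans ?_
    rcases hp.2 j (by omega) with h | h <;> rw [h] <;> exact le_self_add

end IsNEPath

/-- `f s ≤ g s` are the `x`-coordinates of the points of rank `s` (on the antidiagonal
`x + y = s`) of the upper and the lower boundary path of a parallelogram polyomino. -/
structure ParaProfile (k : ℕ) (f g : ℕ → ℕ) : Prop where
  two_le : 2 ≤ k
  left_zero : f 0 = 0
  right_zero : g 0 = 0
  left_mono : ∀ {s t}, s ≤ t → t ≤ k → f s ≤ f t
  right_mono : ∀ {s t}, s ≤ t → t ≤ k → g s ≤ g t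
  left_le_add : ∀ {s t}, s ≤ t → t ≤ k → f t ≤ f s + (t - s)
  right_le_add : ∀ {s t}, s ≤ t → t ≤ k → g t ≤ g s + (t - s)
  lt : ∀ {s}, 0 < s → s < k → f s < g s
  top : f k = g k

def paraRegion (k : ℕ) (f g : ℕ → ℕ) : Set Pt :=
  {v | v.1 + v.2 ≤ k ∧ f (v.1 + v.2) ≤ v.1 ∧ v.1 ≤ g (v.1 + v.2)}

theorem ParaData.paraProfile {P : Finset Pt} {k : ℕ} {u l : ℕ → Pt} (hd : ParaData P k u l) :
    ParaProfile k (fun s => (u s).1) (fun s => (l s).1) := by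
  obtain ⟨-, hu, hl, htop, hle, hne, ⟨c, hc⟩, hmem⟩ := hd
  have hk := ((hmem c).1 hc (c.1 + 1, c.2 + 1) (by simp [cellVerts])).1
  refine ⟨by omega, by simp [hu.1], by simp [hl.1], fun hst ht => (hu.le_of_le hst ht).1,
    fun hst ht => (hl.le_of_le hst ht).1, fun {s t} hst ht => ?_, fun {s t} hst ht => ?_,
    fun {s} h0 hs => (hle s hs.le).lt_of_ne fun h => hne s h0 hs (Prod.ext h ?_),
    congrArg Prod.fst htop⟩
  · have := hu.rank ht; have := hu.rank (hst.trans ht); have := (hu.le_of_le hst ht).2; omega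
  · have := hl.rank ht; have := hl.rank (hst.trans ht); have := (hl.le_of_le hst ht).2; omega
  · have := hu.rank hs.le; have := hl.rank hs.le; omega

theorem ParaData.isCellsOf {P : Finset Pt} {k : ℕ} {u l : ℕ → Pt} (hd : ParaData P k u l) :
    IsCellsOf P (paraRegion k (fun s => (u s).1) (fun s => (l s).1)) :=
  hd.2.2.2.2.2.2.2

-- Naming the rank `s` keeps the arguments of `f` and `g` in a normal form for `omega`.
theorem mem_paraRegion_of_add_eq {k s x y : ℕ} {f g : ℕ → ℕ} (h : x + y = s) :
    (x, y) ∈ paraRegion k f g ↔ s ≤ k ∧ f s ≤ x ∧ x ≤ g s := by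
  subst h; rfl

namespace ParaProfile

variable {P : Finset Pt} {k : ℕ} {f g : ℕ → ℕ}

theorem left_le_self (hf : ParaProfile k f g) {s : ℕ} (hs : s ≤ k) : f s ≤ s := by
  have := hf.left_le_add (Nat.zero_le s) hs; have := hf.left_zero; omega

theorem right_le_self (hf : ParaProfile k f g) {s : ℕ} (hs : s ≤ k) : g s ≤ s := by
  have := hf.right_le_add (Nat.zero_le s) hs; have := hf.right_zero; omega

theorem left_lt_self (hf : ParaProfile k f g) {s : ℕ} (h0 : 0 < s) (hs : s ≤ k) : f s < s := by
  have := hf.lt one_pos (by have := hf.two_le; omega)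
  have := hf.right_le_self (s := 1) (by have := hf.two_le; omega)
  have := hf.left_le_add (s := 1) h0 hs
  omega

/-- Transposition exchanges the two paths: the point of rank `s` of the transposed upper path is
the mirror image of the point `(g s, s - g s)` of the lower path. -/
theorem transpose (hf : ParaProfile k f g) :
    ParaProfile k (fun s => s - g s) (fun s => s - f s) := by
  refine ⟨hf.two_le, by simp, by simp, fun {s t} hst ht => ?_, fun {s t} hst ht => ?_,
    fun {s t} hst ht => ?_, fun {s t} hst ht => ?_, fun h0 hs => ?_, by simp [hf.top]⟩
  · have := hf.right_le_add hst ht; omega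
  · have := hf.left_le_add hst ht; omega
  · have := hf.right_mono hst ht; have := hf.right_le_self (hst.trans ht); omega
  · have := hf.left_mono hst ht; have := hf.left_le_self (hst.trans ht); omega
  · have := hf.lt h0 hs; have := hf.right_le_self hs.le; omega

theorem paraRegion_transpose (hf : ParaProfile k f g) :
    paraRegion k (fun s => s - g s) (fun s => s - f s) = Prod.swap ⁻¹' paraRegion k f g := by
  ext ⟨y, x⟩
  rw [Set.mem_preimage, Prod.swap_prod_mk, mem_paraRegion_of_add_eq (add_comm y x),
    mem_paraRegion_of_add_eq rfl]
  by_cases hk : x + y ≤ k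
  · have := hf.left_le_self hk; have := hf.right_le_self hk; omega
  · omega

theorem forall_mem_cellVerts (hf : ParaProfile k f g) {x y : ℕ}
    (h₁ : (x + 1, y) ∈ paraRegion k f g) (h₂ : (x, y + 1) ∈ paraRegion k f g) :
    ∀ v ∈ cellVerts (x, y), v ∈ paraRegion k f g := by
  obtain ⟨hk, hf₁, hg₁⟩ := (mem_paraRegion_of_add_eq (s := x + y + 1) (by omega)).1 h₁
  obtain ⟨-, hf₂, hg₂⟩ := (mem_paraRegion_of_add_eq (s := x + y + 1) (by omega)).1 h₂
  have hk' : x + y + 1 ≠ k := fun h => by have := hf.top; rw [← h] at this; omega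
  have := hf.left_mono (Nat.le_add_right (x + y) 1) hk
  have := hf.right_le_add (Nat.le_add_right (x + y) 1) hk
  have := hf.left_le_add (by omega : x + y + 1 ≤ x + y + 2) (by omega)
  have := hf.right_mono (by omega : x + y + 1 ≤ x + y + 2) (by omega)
  simp only [cellVerts, Finset.mem_insert, Finset.mem_singleton, forall_eq_or_imp, forall_eq]
  exact ⟨(mem_paraRegion_of_add_eq rfl).2 ⟨by omega, by omega, by omega⟩, h₁, h₂,
    (mem_paraRegion_of_add_eq (s := x + y + 2) (by omega)).2 ⟨by omega, by omega, by omega⟩⟩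

theorem exists_cell_mem_cellVerts (hf : ParaProfile k f g) {x y : ℕ}
    (h : (x, y) ∈ paraRegion k f g) :
    ∃ c : Pt, (c.1 + 1, c.2) ∈ paraRegion k f g ∧ (c.1, c.2 + 1) ∈ paraRegion k f g ∧
      (x, y) ∈ cellVerts c := by
  obtain ⟨hk, hfx, hxg⟩ := (mem_paraRegion_of_add_eq rfl).1 h
  have h2 := hf.two_le
  simp only [cellVerts, Finset.mem_insert, Finset.mem_singleton, Prod.mk.injEq]
  rcases Nat.eq_zero_or_pos (x + y) with h0 | h0
  · have := hf.lt one_pos (by omega); have := hf.left_lt_self one_pos (by omega)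
    exact ⟨(0, 0), (mem_paraRegion_of_add_eq (s := 1) rfl).2 ⟨by omega, by omega, by omega⟩,
      (mem_paraRegion_of_add_eq (s := 1) rfl).2 ⟨by omega, by omega, by omega⟩, by simp; omega⟩
  rcases hk.eq_or_lt with hk | hk
  · have := hf.lt (s := k - 1) (by omega) (by omega)
    have := hf.left_le_add (Nat.sub_le k 1) le_rfl
    have := hf.right_mono (Nat.sub_le k 1) le_rfl
    have := hf.right_le_self (Nat.sub_le k 1)
    have := hf.top
    subst hk
    refine ⟨(x - 1, y - 1), (mem_paraRegion_of_add_eq (s := x + y - 1) (by omega)).2 ?_,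
      (mem_paraRegion_of_add_eq (s := x + y - 1) (by omega)).2 ?_, by omega⟩ <;> omega
  have := hf.lt h0 hk
  have := hf.right_le_self hk.le
  by_cases hx : x < g (x + y)
  · refine ⟨(x, y - 1), (mem_paraRegion_of_add_eq (s := x + y) (by omega)).2 ?_,
      (mem_paraRegion_of_add_eq (s := x + y) (by omega)).2 ?_, by omega⟩ <;> omega
  · refine ⟨(x - 1, y), (mem_paraRegion_of_add_eq (s := x + y) (by omega)).2 ?_,
      (mem_paraRegion_of_add_eq (s := x + y) (by omega)).2 ?_, by omega⟩ <;> omega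

theorem mem_above_or_mem_below_right (hf : ParaProfile k f g) {r j : ℕ}
    (h₁ : (r, j) ∈ paraRegion k f g) (h₂ : (r + 1, j) ∈ paraRegion k f g) :
    (r, j + 1) ∈ paraRegion k f g ∨ 0 < j ∧ (r + 1, j - 1) ∈ paraRegion k f g := by
  obtain ⟨-, hf₁, hg₁⟩ := (mem_paraRegion_of_add_eq rfl).1 h₁
  obtain ⟨hk, hf₂, hg₂⟩ := (mem_paraRegion_of_add_eq (s := r + j + 1) (by omega)).1 h₂
  have := hf.left_le_add (Nat.le_add_right (r + j) 1) hk
  have := hf.left_lt_self (Nat.add_one_pos (r + j)) hk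
  have := hf.right_le_self (s := r + j) (by omega)
  by_cases hfr : f (r + j + 1) ≤ r
  · exact Or.inl ((mem_paraRegion_of_add_eq (by omega)).2 ⟨hk, hfr, by omega⟩)
  have hg : r + 1 ≤ g (r + j) := by
    rcases Nat.eq_zero_or_pos (r + j) with h0 | h0
    · omega
    · have := hf.lt h0 (by omega); omega
  exact Or.inr ⟨by omega,
    (mem_paraRegion_of_add_eq (s := r + j) (by omega)).2 ⟨by omega, by omega, hg⟩⟩

theorem ordConnected_row (hf : ParaProfile k f g) (y : ℕ) :
    {x | (x, y) ∈ paraRegion k f g}.OrdConnected := by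
  refine ⟨fun x₁ h₁ x₂ h₂ x ⟨hx₁, hx₂⟩ => ?_⟩
  obtain ⟨-, hf₁, -⟩ := (mem_paraRegion_of_add_eq rfl).1 h₁
  obtain ⟨hk, -, hg₂⟩ := (mem_paraRegion_of_add_eq rfl).1 h₂
  have := hf.left_le_add (by omega : x₁ + y ≤ x + y) (by omega)
  have := hf.right_le_add (by omega : x + y ≤ x₂ + y) hk
  exact (mem_paraRegion_of_add_eq rfl).2 ⟨by omega, by omega, by omega⟩

theorem sub_one_mem (hf : ParaProfile k f g) {x y x' y' : ℕ} (h : (x, y) ∈ paraRegion k f g)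
    (h' : (x', y') ∈ paraRegion k f g) (hx : x' < x) (hy : y ≤ y') :
    (x - 1, y) ∈ paraRegion k f g := by
  obtain ⟨hk, -, hg⟩ := (mem_paraRegion_of_add_eq rfl).1 h
  obtain ⟨hk', hf', -⟩ := (mem_paraRegion_of_add_eq rfl).1 h'
  have := hf.right_le_add (by omega : x + y - 1 ≤ x + y) hk
  rw [mem_paraRegion_of_add_eq (s := x + y - 1) (by omega)]
  rcases le_total (x + y - 1) (x' + y') with hs | hs
  · have := hf.left_mono hs hk'; omega
  · have := hf.left_le_add hs (by omega); omega

theorem sub_one_add_one_mem (hf : ParaProfile k f g) {x y : ℕ} (h : (x, y) ∈ paraRegion k f g)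
    (hx : 0 < x) (hl : (x - 1, y) ∈ paraRegion k f g)
    (hd : 0 < y → (x, y - 1) ∉ paraRegion k f g) : (x - 1, y + 1) ∈ paraRegion k f g := by
  obtain ⟨hk, hfs, hgs⟩ := (mem_paraRegion_of_add_eq rfl).1 h
  obtain ⟨-, hfl, -⟩ := (mem_paraRegion_of_add_eq (s := x + y - 1) (by omega)).1 hl
  rw [mem_paraRegion_of_add_eq (s := x + y) (by omega)]
  refine ⟨hk, ?_, by omega⟩
  by_contra hfx
  have := hf.left_le_add (by omega : x + y - 1 ≤ x + y) hk
  rcases Nat.eq_zero_or_pos y with hy | hy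
  · have := hf.left_lt_self (by omega) hk; omega
  · have hd := hd hy
    rw [mem_paraRegion_of_add_eq (s := x + y - 1) (by omega)] at hd
    have := hf.right_le_add (by omega : x + y - 1 ≤ x + y) hk
    have := hf.lt (s := x + y - 1) (by omega) (by omega)
    omega

theorem isCellsOf_transpose (hf : ParaProfile k f g) (hP : IsCellsOf P (paraRegion k f g)) :
    IsCellsOf (P.image Prod.swap) (paraRegion k (fun s => s - g s) (fun s => s - f s)) := by
  rw [hf.paraRegion_transpose]
  exact isCellsOf_image_swap hP

theorem mem_vertexSet_iff (hf : ParaProfile k f g) (hP : IsCellsOf P (paraRegion k f g))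
    {v : Pt} : v ∈ vertexSet P ↔ v ∈ paraRegion k f g := by
  simp only [vertexSet, Finset.mem_biUnion]
  refine ⟨fun ⟨c, hc, hv⟩ => (hP c).1 hc v hv, fun hv => ?_⟩
  obtain ⟨c, h₁, h₂, hc⟩ := hf.exists_cell_mem_cellVerts hv
  exact ⟨c, (hP c).2 (hf.forall_mem_cellVerts h₁ h₂), hc⟩

theorem hEdge_iff (hf : ParaProfile k f g) (hP : IsCellsOf P (paraRegion k f g)) {r j : ℕ} :
    HEdge P r j ↔ (r, j) ∈ vertexSet P ∧ (r + 1, j) ∈ vertexSet P := by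
  have hV : ∀ {c v}, c ∈ P → v ∈ cellVerts c → v ∈ vertexSet P :=
    fun hc hv => Finset.mem_biUnion.2 ⟨_, hc, hv⟩
  constructor
  · rintro (h | ⟨hj, h⟩)
    · exact ⟨hV h (by simp [cellVerts]), hV h (by simp [cellVerts])⟩
    · exact ⟨hV h (by simp [cellVerts]; omega), hV h (by simp [cellVerts]; omega)⟩
  · rw [hf.mem_vertexSet_iff hP, hf.mem_vertexSet_iff hP]
    rintro ⟨h₁, h₂⟩
    rcases hf.mem_above_or_mem_below_right h₁ h₂ with h | ⟨hj, h⟩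
    · exact Or.inl ((hP _).2 (hf.forall_mem_cellVerts h₂ h))
    · refine Or.inr ⟨hj, (hP _).2 (hf.forall_mem_cellVerts h ?_)⟩
      rwa [Nat.sub_add_cancel hj]

theorem mem_HMins_iff (hf : ParaProfile k f g) (hP : IsCellsOf P (paraRegion k f g))
    {a : Pt} : a ∈ HMins P ↔ a ∈ vertexSet P ∧ IsRowMin (vertexSet P) a := by
  obtain ⟨x, y⟩ := a
  set S : Set ℕ := {r | (r, y) ∈ vertexSet P}
  have hedge : (fun r => HEdge P r y) = fun r => r ∈ S ∧ r + 1 ∈ S :=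
    funext fun r => propext (hf.hEdge_iff hP)
  have hS : S.OrdConnected :=
    (Set.ext fun _ => hf.mem_vertexSet_iff hP : S = _) ▸ hf.ordConnected_row y
  have hbdd : BddAbove S := ⟨k, fun r hr => by
    have := ((hf.mem_vertexSet_iff hP).1 hr).1
    simp only at this
    omega⟩
  change (∃ m, IsMaxRun (fun r => HEdge P r y) x m) ↔ _
  rw [hedge, exists_isMaxRun_iff hS hbdd]
  exact ⟨fun ⟨hx, _, hmin⟩ => ⟨hx, hmin⟩,
    fun ⟨hx, hmin⟩ => ⟨hx, add_one_mem_of_isRowMin hx hmin, hmin⟩⟩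

theorem mem_VMins_iff (hf : ParaProfile k f g) (hP : IsCellsOf P (paraRegion k f g))
    {a : Pt} : a ∈ VMins P ↔ a ∈ vertexSet P ∧ IsColMin (vertexSet P) a := by
  rw [← Prod.swap_swap a, ← mem_HMins_image_swap,
    hf.transpose.mem_HMins_iff (hf.isCellsOf_transpose hP), vertexSet_image_swap,
    mem_image_swap, isRowMin_image_swap]

theorem rowMin_le (hf : ParaProfile k f g) (hP : IsCellsOf P (paraRegion k f g)) {a b : Pt}
    (ha : a ∈ vertexSet P) (hmin : IsRowMin (vertexSet P) a) (hb : b ∈ vertexSet P)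
    (h : a.2 ≤ b.2) : a.1 ≤ b.1 := by
  obtain ⟨x, y⟩ := a
  obtain ⟨x', y'⟩ := b
  by_contra! hlt
  rw [hf.mem_vertexSet_iff hP] at ha hb
  have := hmin (x - 1) ((hf.mem_vertexSet_iff hP).2 (hf.sub_one_mem ha hb hlt h))
  simp only at this
  omega

theorem exists_isRowMin_above (hf : ParaProfile k f g) (hP : IsCellsOf P (paraRegion k f g))
    {a : Pt} (ha : a ∈ vertexSet P) (hcol : IsColMin (vertexSet P) a) {x : ℕ}
    (hx : (x, a.2) ∈ vertexSet P) (hxa : x < a.1) :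
    ∃ b ∈ vertexSet P, IsRowMin (vertexSet P) b ∧ b.2 = a.2 + 1 ∧ b.1 < a.1 := by
  obtain ⟨p, q⟩ := a
  rw [hf.mem_vertexSet_iff hP] at ha hx
  have hup := hf.sub_one_add_one_mem ha (by omega) (hf.sub_one_mem ha hx hxa le_rfl)
    fun hq h => by
      have := hcol (q - 1) ((hf.mem_vertexSet_iff hP).2 h)
      simp only at this
      omega
  obtain ⟨b, hb, hmin, h₂, h₁⟩ := exists_isRowMin ((hf.mem_vertexSet_iff hP).2 hup)
  exact ⟨b, hb, hmin, h₂, by simp only at hxa; omega⟩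

theorem maxChainIn_HMins (hf : ParaProfile k f g) (hP : IsCellsOf P (paraRegion k f g)) :
    MaxChainIn {a | JoinIrred (vertexSet P) a} (HMins P \ {(0, 0)}) := by
  have hH : ∀ {a}, a ∈ HMins P ↔ _ := hf.mem_HMins_iff hP
  refine maxChainIn_of_exists_incomparable ?_ ?_ ?_
  · rintro a ⟨ha, ha0⟩
    exact joinIrred_iff.2 ⟨(hH.1 ha).1, ha0, Or.inl (hH.1 ha).2⟩
  · rintro a ⟨ha, -⟩ b ⟨hb, -⟩ -
    rw [hH] at ha hb
    rcases le_total a.2 b.2 with h | h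
    · exact Or.inl ⟨hf.rowMin_le hP ha.1 ha.2 hb.1 h, h⟩
    · exact Or.inr ⟨hf.rowMin_le hP hb.1 hb.2 ha.1 h, h⟩
  · intro a haJ hnot
    obtain ⟨haV, ha0, hmin⟩ := joinIrred_iff.1 haJ
    have hrow : ¬IsRowMin (vertexSet P) a := fun h => hnot ⟨hH.2 ⟨haV, h⟩, ha0⟩
    obtain ⟨x, hx, hxa⟩ : ∃ x, (x, a.2) ∈ vertexSet P ∧ x < a.1 := by
      simpa [IsRowMin] using hrow
    obtain ⟨b, hb, hbmin, hb₂, hb₁⟩ :=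
      hf.exists_isRowMin_above hP haV (hmin.resolve_left hrow) hx hxa
    refine ⟨b, ⟨hH.2 ⟨hb, hbmin⟩, fun h => ?_⟩, fun h => ?_, fun h => ?_⟩
    · rw [Set.mem_singleton_iff.1 h] at hb₂; omega
    · have := h.1; omega
    · have := h.2; omega

theorem maxChainIn_VMins (hf : ParaProfile k f g) (hP : IsCellsOf P (paraRegion k f g)) :
    MaxChainIn {a | JoinIrred (vertexSet P) a} (VMins P \ {(0, 0)}) := by
  refine MaxChainIn.of_preimage_swap ?_
  convert hf.transpose.maxChainIn_HMins (hf.isCellsOf_transpose hP) using 1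
  · ext a
    simp [vertexSet_image_swap, joinIrred_image_swap]
  · ext a
    simp [mem_HMins_image_swap, Prod.swap_eq_iff_eq_swap]

end ParaProfile

theorem stmt19 (P : Finset Pt) (hP : IsParaPoly P) :
    (∀ a : Pt, JoinIrred (vertexSet P) a ↔
      (a ≠ (0, 0) ∧ (a ∈ HMins P ∨ a ∈ VMins P))) ∧
    (HMins P \ {(0, 0)} : Set Pt) ⊆ ↑(vertexSet P) ∧
    (VMins P \ {(0, 0)} : Set Pt) ⊆ ↑(vertexSet P) ∧
    IsChain (· ≤ ·) (HMins P \ {(0, 0)} : Set Pt) ∧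
    IsChain (· ≤ ·) (VMins P \ {(0, 0)} : Set Pt) ∧
    MaxChainIn {a | JoinIrred (vertexSet P) a} (HMins P \ {(0, 0)}) ∧
    MaxChainIn {a | JoinIrred (vertexSet P) a} (VMins P \ {(0, 0)}) := by
  obtain ⟨k, u, l, hd⟩ := hP
  have hf := hd.paraProfile
  have hH := hf.maxChainIn_HMins hd.isCellsOf
  have hV := hf.maxChainIn_VMins hd.isCellsOf
  refine ⟨fun a => ?_, fun a ha => (hH.1 ha).1, fun a ha => (hV.1 ha).1, hH.2.1, hV.2.1, hH, hV⟩
  rw [joinIrred_iff, hf.mem_HMins_iff hd.isCellsOf, hf.mem_VMins_iff hd.isCellsOf]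
  tauto
end
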